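/- arXiv:1710.10395 — 8 statements merged into one kernel-verified Lean document; each statement's English description precedes it below -/
import Mathlib

section
/- Let x ∈ (0,1). If (1−x)·f(τx) ≤ ν·x then q ≤ x, and if (1−x)·f(τx) ≥ ν·x then q ≥ x. -/
open Set

/-- Let `f : [0,∞) → [0,∞)` be increasing, concave and continuous with
`f 0 = 0` and `f u > 0` for some `u > 0`.  For `τ, ν > 0` let `q` be the largest fixed
point in `[0,1]` of `F(x) = f(τx)/(ν + f(τx))`.  For `x ∈ (0,1)`:
if `(1−x)·f(τx) ≤ ν·x` then `q ≤ x`, and if `(1−x)·f(τx) ≥ ν·x` then `q ≥ x`. -/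
theorem stmt0
    (f : ℝ → ℝ)
    (hf_mono : MonotoneOn f (Ici (0:ℝ)))
    (hf_conc : ConcaveOn ℝ (Ici (0:ℝ)) f)
    (hf_cont : ContinuousOn f (Ici (0:ℝ)))
    (hf_nonneg : ∀ x ≥ (0:ℝ), 0 ≤ f x)
    (hf0 : f 0 = 0)
    (hf_pos : ∃ u > (0:ℝ), 0 < f u)
    (τ ν : ℝ) (hτ : 0 < τ) (hν : 0 < ν)
    (q : ℝ)
    (hq : IsGreatest {x ∈ Icc (0:ℝ) 1 | f (τ * x) / (ν + f (τ * x)) = x} q)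
    (x : ℝ) (hx : x ∈ Ioo (0:ℝ) 1) :
    ((1 - x) * f (τ * x) ≤ ν * x → q ≤ x) ∧
    (ν * x ≤ (1 - x) * f (τ * x) → x ≤ q) := by
  obtain ⟨⟨⟨hq0, hq1⟩, hqfix⟩, hqmax⟩ := hq
  obtain ⟨hx0, hx1⟩ := hx
  have hAq : 0 ≤ f (τ*q) := hf_nonneg _ (mul_nonneg hτ.le hq0)
  have hden : 0 < ν + f (τ*q) := by linarith
  have hfixq : f (τ*q) = q * (ν + f (τ*q)) := by
    rw [div_eq_iff hden.ne'] at hqfix; exact hqfix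
  constructor
  · intro h1
    by_contra hlt
    push_neg at hlt
    have hq_pos : 0 < q := lt_trans hx0 hlt
    have hq1' : q < 1 := by
      rcases lt_or_eq_of_le hq1 with h | h
      · exact h
      · exfalso; rw [h] at hfixq; nlinarith
    -- concavity between 0 and q
    have hmem0 : (0:ℝ) ∈ Ici (0:ℝ) := mem_Ici.2 le_rfl
    have hmemq : τ * q ∈ Ici (0:ℝ) := mul_nonneg hτ.le hq0
    have ha : (0:ℝ) ≤ 1 - x/q := by
      rw [sub_nonneg, div_le_one hq_pos]; exact hlt.le
    have hb : (0:ℝ) ≤ x/q := div_nonneg hx0.le hq0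
    have hab : (1 - x/q) + x/q = 1 := by ring
    have key := hf_conc.2 hmem0 hmemq ha hb hab
    have harg : (1 - x/q) • (0:ℝ) + (x/q) • (τ * q) = τ * x := by
      simp [smul_eq_mul]
      field_simp
    rw [harg, hf0, smul_eq_mul, smul_eq_mul, mul_zero, zero_add] at key
    -- key : (x/q) * f (τ*q) ≤ f (τ*x)
    have key2 : x * f (τ*q) ≤ q * f (τ*x) := by
      rw [div_mul_eq_mul_div, div_le_iff₀ hq_pos] at key; linarith [key]
    have hAx : 0 ≤ f (τ*x) := hf_nonneg _ (mul_nonneg hτ.le hx0.le)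
    have s1 : (1-q) * f (τ*q) = q * ν := by linear_combination hfixq
    have s2 : q * (ν * x) ≤ q * ((1-q) * f (τ*x)) := by
      nlinarith [mul_le_mul_of_nonneg_left key2 (show (0:ℝ) ≤ 1-q by linarith)]
    have s3 : ν * x ≤ (1-q) * f (τ*x) := le_of_mul_le_mul_left s2 hq_pos
    nlinarith [mul_le_mul_of_nonneg_left s3 (show (0:ℝ) ≤ 1-x by linarith),
      mul_le_mul_of_nonneg_left h1 (show (0:ℝ) ≤ 1-q by linarith),
      mul_pos (mul_pos hν hx0) (sub_pos.2 hlt)]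
  · intro h2
    set G : ℝ → ℝ := fun y => f (τ*y) - y*(ν + f (τ*y)) with hG
    have hcomp : ContinuousOn (fun y => f (τ*y)) (Icc x 1) := by
      apply hf_cont.comp ((continuous_const.mul continuous_id).continuousOn)
      intro y hy
      exact mul_nonneg hτ.le (le_trans hx0.le hy.1)
    have hGcont : ContinuousOn G (Icc x 1) := by
      apply hcomp.sub
      exact (continuousOn_id.mul (continuousOn_const.add hcomp))
    have hGx : 0 ≤ G x := by simp only [hG]; nlinarith
    have hG1 : G 1 ≤ 0 := by simp only [hG]; nlinarith
    obtain ⟨c, hc, hGc⟩ := intermediate_value_Icc' hx1.le hGcont ⟨hG1, hGx⟩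
    have hc0 : 0 ≤ c := le_trans hx0.le hc.1
    have hAc : 0 ≤ f (τ*c) := hf_nonneg _ (mul_nonneg hτ.le hc0)
    have hdenc : 0 < ν + f (τ*c) := by linarith
    have hfixc : f (τ * c) / (ν + f (τ * c)) = c := by
      rw [div_eq_iff hdenc.ne']
      simp only [hG] at hGc; linarith
    exact le_trans hc.1 (hqmax ⟨⟨hc0, hc.2⟩, hfixc⟩)
end

section
/- If τ·f′(0) ≤ ν, then 0 is the only fixed point of F(·; τ, ν) in [0,∞). If τ·f′(0) > ν, then F(·; τ, ν) has exactly one fixed point q in (0,∞); moreover F(x; τ, ν) > x for all x ∈ (0, q) and F(x; τ, ν) < x for all x > q. -/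
open Set

/-- Let `f : [0,∞) → [0,∞)` be increasing, concave and continuous with
`f 0 = 0`, `f u > 0` for some `u > 0`, and right derivative `f'0` at `0`.
For `τ, ν > 0` set `F(x) = f(τx)/(ν + f(τx))`.  If `τ·f′(0) ≤ ν` then `0` is the only
fixed point of `F` in `[0,∞)`; if `τ·f′(0) > ν` then `F` has exactly one fixed point
`q` in `(0,∞)`, with `F x > x` on `(0,q)` and `F x < x` for `x > q`. -/
theorem stmt1
    (f : ℝ → ℝ)
    (hf_mono : MonotoneOn f (Ici (0:ℝ)))
    (hf_conc : ConcaveOn ℝ (Ici (0:ℝ)) f)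
    (hf_cont : ContinuousOn f (Ici (0:ℝ)))
    (hf_nonneg : ∀ x ≥ (0:ℝ), 0 ≤ f x)
    (hf0 : f 0 = 0)
    (hf_pos : ∃ u > (0:ℝ), 0 < f u)
    (f'0 : ℝ) (hf' : HasDerivWithinAt f f'0 (Ici (0:ℝ)) 0)
    (τ ν : ℝ) (hτ : 0 < τ) (hν : 0 < ν)
    (F : ℝ → ℝ) (hF : ∀ x ≥ (0:ℝ), F x = f (τ * x) / (ν + f (τ * x))) :
    (τ * f'0 ≤ ν → ∀ x ≥ (0:ℝ), F x = x → x = 0) ∧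
    (ν < τ * f'0 → ∃ q : ℝ, 0 < q ∧ F q = q ∧
      (∀ x, 0 < x → F x = x → x = q) ∧
      (∀ x, 0 < x → x < q → x < F x) ∧
      (∀ x, q < x → F x < x)) := by
  have hden : ∀ x : ℝ, 0 ≤ x → 0 < ν + f (τ * x) := by
    intro x hx
    have := hf_nonneg (τ * x) (by positivity)
    linarith
  -- slope concavity
  have slope_conc : ∀ a b : ℝ, 0 ≤ a → a ≤ b → a * f b ≤ b * f a := by
    intro a b ha hab
    rcases eq_or_lt_of_le (ha.trans hab) with hb | hb
    · have ha0 : a = 0 := le_antisymm (hab.trans hb.symm.le) ha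
      subst ha0; rw [← hb]
    · have hθ1 : 0 ≤ a / b := div_nonneg ha hb.le
      have hθ2 : 0 ≤ 1 - a / b := by
        have : a / b ≤ 1 := (div_le_one hb).mpr hab
        linarith
      have h := hf_conc.2 (mem_Ici.mpr hb.le) (mem_Ici.mpr le_rfl) hθ1 hθ2 (by ring)
      simp only [smul_eq_mul, mul_zero, hf0, add_zero] at h
      rw [div_mul_cancel₀ _ hb.ne'] at h
      -- h : a / b * f b ≤ f a
      rw [div_mul_eq_mul_div, div_le_iff₀ hb] at h
      linarith
  -- slope tends to f'0
  have hslope : Filter.Tendsto (fun x => f x / x) (nhdsWithin 0 (Ioi 0)) (nhds f'0) := by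
    have h := hasDerivWithinAt_iff_tendsto_slope.mp hf'
    rw [Set.Ici_sdiff_left] at h
    refine Filter.Tendsto.congr' ?_ h
    filter_upwards [self_mem_nhdsWithin] with x hx
    simp [slope_fun_def, hf0, inv_mul_eq_div]
  have keyA : ∀ t : ℝ, 0 < t → f t ≤ f'0 * t := by
    intro t ht
    have hev : ∀ᶠ x in nhdsWithin 0 (Ioi 0), f t / t ≤ f x / x := by
      filter_upwards [Ioo_mem_nhdsGT_of_mem (⟨le_rfl, ht⟩ : (0:ℝ) ∈ Ico 0 t)] with x hx
      have h1 : x * f t ≤ t * f x := slope_conc x t hx.1.le hx.2.le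
      rw [div_le_div_iff₀ ht hx.1]
      nlinarith
    have h2 : f t / t ≤ f'0 := ge_of_tendsto hslope hev
    have := (div_le_iff₀ ht).mp h2
    linarith
  -- limit of f(τx)/x
  have hmap : Filter.Tendsto (fun x : ℝ => τ * x) (nhdsWithin 0 (Ioi 0))
      (nhdsWithin 0 (Ioi 0)) := by
    rw [tendsto_nhdsWithin_iff]
    constructor
    · have hc : Continuous (fun x : ℝ => τ * x) := continuous_const.mul continuous_id
      have h := (hc.tendsto 0).mono_left (nhdsWithin_le_nhds (s := Ioi (0:ℝ)))
      simpa using h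
    · filter_upwards [self_mem_nhdsWithin] with x hx
      exact mul_pos hτ hx
  have hFslope : Filter.Tendsto (fun x => f (τ * x) / x) (nhdsWithin 0 (Ioi 0))
      (nhds (τ * f'0)) := by
    have h := (hslope.comp hmap).const_mul τ
    refine Filter.Tendsto.congr' ?_ h
    filter_upwards [self_mem_nhdsWithin] with x hx
    have hx0 : x ≠ 0 := ne_of_gt hx
    simp only [Function.comp]
    field_simp
  -- the auxiliary function g
  set g : ℝ → ℝ := fun x => f (τ * x) - x * (ν + f (τ * x)) with hg
  have hfix_iff : ∀ x : ℝ, 0 ≤ x → (F x = x ↔ g x = 0) := by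
    intro x hx
    rw [hF x hx, div_eq_iff (hden x hx).ne']
    constructor
    · intro h; simp only [hg]; linarith
    · intro h; simp only [hg] at h; linarith
  have hgt_iff : ∀ x : ℝ, 0 ≤ x → (x < F x ↔ 0 < g x) := by
    intro x hx
    rw [hF x hx, lt_div_iff₀ (hden x hx)]
    constructor
    · intro h; simp only [hg]; linarith
    · intro h; simp only [hg] at h; linarith
  have hlt_iff : ∀ x : ℝ, 0 ≤ x → (F x < x ↔ g x < 0) := by
    intro x hx
    rw [hF x hx, div_lt_iff₀ (hden x hx)]
    constructor
    · intro h; simp only [hg]; linarith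
    · intro h; simp only [hg] at h; linarith
  -- key comparison
  have compB : ∀ a b : ℝ, 0 < a → a < b → 0 ≤ g b → 0 < g a := by
    intro a b ha hab hgb
    have hb : 0 < b := ha.trans hab
    have hA0 : 0 ≤ f (τ * a) := hf_nonneg _ (by positivity)
    have hB0 : 0 ≤ f (τ * b) := hf_nonneg _ (by positivity)
    have hs : (τ * a) * f (τ * b) ≤ (τ * b) * f (τ * a) :=
      slope_conc (τ * a) (τ * b) (by positivity) (by nlinarith)
    have hs' : a * f (τ * b) ≤ b * f (τ * a) := by nlinarith
    simp only [hg] at hgb ⊢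
    have hB : 0 < f (τ * b) := by nlinarith [mul_pos hb hν]
    have hb1 : b < 1 := by nlinarith
    nlinarith [mul_pos ha hB, mul_pos (mul_pos ha hB) (sub_pos.mpr hab),
      mul_le_mul_of_nonneg_right hs' (by linarith : (0:ℝ) ≤ 1 - a),
      mul_le_mul_of_nonneg_left hgb ha.le]
  constructor
  · -- subcritical case
    intro hle x hx hfix
    by_contra hne
    have hxpos : 0 < x := lt_of_le_of_ne hx (Ne.symm hne)
    have hg0 : g x = 0 := (hfix_iff x hx).mp hfix
    simp only [hg] at hg0
    have hA : 0 ≤ f (τ * x) := hf_nonneg _ (by positivity)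
    have hkey := keyA (τ * x) (by positivity)
    rcases eq_or_lt_of_le hA with h0 | h0
    · rw [← h0] at hg0
      nlinarith [mul_pos hxpos hν]
    · nlinarith [mul_pos hxpos h0, mul_le_mul_of_nonneg_right hle hx]
  · -- supercritical case
    intro hgt
    have hev : ∀ᶠ x in nhdsWithin 0 (Ioi 0), ν < f (τ * x) / x * (1 - x) := by
      have hlim : Filter.Tendsto (fun x => f (τ * x) / x * (1 - x)) (nhdsWithin 0 (Ioi 0))
          (nhds (τ * f'0 * (1 - 0))) :=
        hFslope.mul (((continuous_const.sub continuous_id).tendsto (0:ℝ)).mono_left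
          nhdsWithin_le_nhds)
      exact hlim.eventually (eventually_gt_nhds (by linarith))
    obtain ⟨ε, hε1, hε2⟩ :=
      (hev.and (Ioo_mem_nhdsGT_of_mem (⟨le_rfl, one_pos⟩ : (0:ℝ) ∈ Ico 0 1))).exists
    have hεpos : 0 < ε := hε2.1
    have hgε : 0 < g ε := by
      rw [div_mul_eq_mul_div, lt_div_iff₀ hεpos] at hε1
      simp only [hg]
      nlinarith
    have hfc : ContinuousOn (fun x => f (τ * x)) (Icc ε 1) := by
      apply hf_cont.comp ((continuous_const.mul continuous_id).continuousOn)
      intro x hx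
      exact mem_Ici.mpr (mul_pos hτ (lt_of_lt_of_le hεpos hx.1)).le
    have hgc : ContinuousOn g (Icc ε 1) := by
      simp only [hg]
      exact hfc.sub (continuousOn_id.mul (continuousOn_const.add hfc))
    have h1g : g 1 = -ν := by simp only [hg]; ring
    have h0mem : (0:ℝ) ∈ Icc (g 1) (g ε) := ⟨by rw [h1g]; linarith, hgε.le⟩
    obtain ⟨q, hqmem, hgq⟩ := intermediate_value_Icc' hε2.2.le hgc h0mem
    have hqpos : 0 < q := lt_of_lt_of_le hεpos hqmem.1
    refine ⟨q, hqpos, (hfix_iff q hqpos.le).mpr hgq, ?_, ?_, ?_⟩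
    · intro x hx hfx
      have hgx : g x = 0 := (hfix_iff x hx.le).mp hfx
      by_contra hne
      rcases lt_or_gt_of_ne hne with h | h
      · exact absurd hgx (ne_of_gt (compB x q hx h hgq.ge))
      · exact absurd hgq (ne_of_gt (compB q x hqpos h hgx.ge))
    · intro x hx hxq
      exact (hgt_iff x hx.le).mpr (compB x q hx hxq hgq.ge)
    · intro x hqx
      have hx : 0 < x := hqpos.trans hqx
      refine (hlt_iff x hx.le).mpr ?_
      by_contra h
      push_neg at h
      exact absurd hgq (ne_of_gt (compB q x hqpos hqx h))
end

section
/- If q ∈ (0,1] satisfies F(q; τ, ν) = q, then the derivative of x ↦ F(x; τ, ν) at x = q is at most 1 − q. -/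
open Set

/-! Concavity and `f 0 = 0` give `f'(τq) τq ≤ f(τq)`. Writing `y = f(τq)`, the fixed-point
equation says `y / (ν + y) = q`, hence `ν / (ν + y) = 1 - q`, and
`q F'(q) = ν f'(τq) τq / (ν + y)² ≤ ν y / (ν + y)² = q (1 - q)`. -/

theorem ConcaveOn.deriv_mul_le_of_map_zero {f : ℝ → ℝ} {x : ℝ} (hf : ConcaveOn ℝ (Ici 0) f)
    (h0 : f 0 = 0) (hx : 0 < x) (hd : DifferentiableAt ℝ f x) : deriv f x * x ≤ f x := by
  have h := hf.deriv_le_slope self_mem_Ici (mem_Ici.2 hx.le) hx hd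
  rw [slope_def_field, h0, sub_zero, sub_zero] at h
  exact (le_div_iff₀ hx).1 h

theorem HasDerivAt.div_const_add_self {g : ℝ → ℝ} {g' x ν : ℝ} (hg : HasDerivAt g g' x)
    (hx : ν + g x ≠ 0) :
    HasDerivAt (fun x => g x / (ν + g x)) (ν * g' / (ν + g x) ^ 2) x :=
  (hg.fun_div (hg.const_add ν) hx).congr_deriv (by ring)

theorem mul_div_add_sq_le_one_sub_of_div_add_eq {ν y g' q : ℝ} (hν : 0 ≤ ν) (hq : 0 < q)
    (hfix : y / (ν + y) = q) (hslope : g' * q ≤ y) : ν * g' / (ν + y) ^ 2 ≤ 1 - q := by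
  have hne : ν + y ≠ 0 := (div_ne_zero_iff.1 (hfix ▸ hq.ne')).2
  have hcompl : ν / (ν + y) = 1 - q := by
    rw [← hfix, eq_sub_iff_add_eq, ← add_div, div_self hne]
  refine le_of_mul_le_mul_right ?_ hq
  calc ν * g' / (ν + y) ^ 2 * q = ν * (g' * q) / (ν + y) ^ 2 := by ring
    _ ≤ ν * y / (ν + y) ^ 2 := by gcongr
    _ = ν / (ν + y) * (y / (ν + y)) := by rw [div_mul_div_comm, sq]
    _ = (1 - q) * q := by rw [hcompl, hfix]

theorem stmt2_general
    (f : ℝ → ℝ)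
    (hf_conc : ConcaveOn ℝ (Ici (0:ℝ)) f)
    (hf_diff : ContDiff ℝ 1 f)
    (hf0 : f 0 = 0)
    (τ ν : ℝ) (hτ : 0 < τ) (hν : 0 < ν)
    (q : ℝ) (hq : q ∈ Ioc (0:ℝ) 1)
    (hfix : f (τ * q) / (ν + f (τ * q)) = q) :
    deriv (fun x => f (τ * x) / (ν + f (τ * x))) q ≤ 1 - q := by
  obtain ⟨hq0, -⟩ := hq
  have hd : DifferentiableAt ℝ f (τ * q) := hf_diff.differentiable one_ne_zero _
  have hne : ν + f (τ * q) ≠ 0 := (div_ne_zero_iff.1 (hfix ▸ hq0.ne')).2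
  have hg : HasDerivAt (fun x => f (τ * x)) (deriv f (τ * q) * τ) q :=
    hd.hasDerivAt.comp q (by simpa using (hasDerivAt_id q).const_mul τ)
  rw [(hg.div_const_add_self hne).deriv]
  refine mul_div_add_sq_le_one_sub_of_div_add_eq hν.le hq0 hfix ?_
  rw [mul_assoc]
  exact hf_conc.deriv_mul_le_of_map_zero hf0 (mul_pos hτ hq0) hd

/-- Let `f : [0,∞) → [0,∞)` be increasing, concave and continuously
differentiable with `f 0 = 0`.  For `τ, ν > 0` let `F(x) = f(τx)/(ν + f(τx))`.
If `q ∈ (0,1]` is a fixed point of `F`, then the derivative of `F` at `q` is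
at most `1 − q`. -/
theorem stmt2
    (f : ℝ → ℝ)
    (hf_mono : MonotoneOn f (Ici (0:ℝ)))
    (hf_conc : ConcaveOn ℝ (Ici (0:ℝ)) f)
    (hf_diff : ContDiff ℝ 1 f)
    (hf_nonneg : ∀ x ≥ (0:ℝ), 0 ≤ f x)
    (hf0 : f 0 = 0)
    (τ ν : ℝ) (hτ : 0 < τ) (hν : 0 < ν)
    (q : ℝ) (hq : q ∈ Ioc (0:ℝ) 1)
    (hfix : f (τ * q) / (ν + f (τ * q)) = q) :
    deriv (fun x => f (τ * x) / (ν + f (τ * x))) q ≤ 1 - q :=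
  stmt2_general f hf_conc hf_diff hf0 τ ν hτ hν q hq hfix
end

section
/- Suppose q_1 ≥ η for some η > 0. Then q_β ≥ βη + 1 − β for every β ∈ (1, (1−η)^{−1}), and q_α ≥ αη for every α ∈ (0,1). -/
/-!
Write `Q = q 1`. The fixed-point equation at `α = 1` reads `e Q = (1 - Q) f(Qρ)`, and concavity
with `f 0 = 0` gives `c f(Qρ) ≤ Q f(cρ)` for `0 ≤ c ≤ Q`; together, `e c ≤ (1 - Q) f(cρ)`.
For `c = βη + 1 - β` (where `1 - c = β(1 - η) ≥ β(1 - Q)`) and for `c = αη`, both at most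
`η ≤ Q`, this makes `x ↦ (1 - x) f(xρ) - α e x` nonnegative at `c`, while it is `-α e < 0` at
`1`, so the intermediate value theorem produces a solution of the fixed-point equation in `[c, 1]`,
and `q α ≥ c`.
-/

open Set

theorem ConcaveOn.mul_map_le_mul_map_of_le {f : ℝ → ℝ} (hf : ConcaveOn ℝ (Ici 0) f)
    (hf0 : 0 ≤ f 0) {a b : ℝ} (ha : 0 ≤ a) (hab : a ≤ b) : a * f b ≤ b * f a := by
  rcases hab.eq_or_lt with rfl | hab
  · rfl
  have hb : 0 < b := ha.trans_lt hab
  have ht : 0 ≤ 1 - a / b := sub_nonneg.2 (div_le_one_of_le₀ hab.le hb.le)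
  have hchord := hf.2 (mem_Ici.2 hb.le) (mem_Ici.2 le_rfl) (div_nonneg ha hb.le) ht
    (add_sub_cancel _ _)
  simp only [smul_eq_mul, mul_zero, add_zero, div_mul_cancel₀ a hb.ne'] at hchord
  calc a * f b = b * (a / b * f b) := by field_simp
    _ ≤ b * (a / b * f b + (1 - a / b) * f 0) := by
        gcongr; exact le_add_of_nonneg_right (mul_nonneg ht hf0)
    _ ≤ b * f a := by gcongr

theorem eq_div_add_iff {K : Type*} [Field K] {a x y : K} (h : a + y ≠ 0) :
    x = y / (a + y) ↔ a * x = (1 - x) * y := by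
  rw [eq_div_iff h]
  constructor <;> intro h <;> linear_combination h

theorem exists_eq_div_add_of_mul_le {φ : ℝ → ℝ} {a c : ℝ} (ha : 0 < a) (hc : c ≤ 1)
    (hφ : ContinuousOn φ (Icc c 1)) (hφ_nonneg : ∀ x ∈ Icc c 1, 0 ≤ φ x)
    (hac : a * c ≤ (1 - c) * φ c) : ∃ x ∈ Icc c 1, x = φ x / (a + φ x) := by
  have hcont : ContinuousOn (fun x => (1 - x) * φ x - a * x) (Icc c 1) := by fun_prop
  obtain ⟨x, hx, hx0⟩ := intermediate_value_Icc' hc hcont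
    ⟨by simpa using ha.le, sub_nonneg.2 hac⟩
  refine ⟨x, hx, (eq_div_add_iff (by linarith [hφ_nonneg x hx])).2 ?_⟩
  linarith

theorem mul_le_one_sub_mul_of_le_of_fixed {f : ℝ → ℝ} (hf : ConcaveOn ℝ (Ici 0) f)
    (hf0 : 0 ≤ f 0) {ρ e Q c : ℝ} (hρ : 0 < ρ) (hQ : 0 < Q) (hQ1 : Q ≤ 1)
    (hfix : e * Q = (1 - Q) * f (Q * ρ)) (hc : 0 ≤ c) (hcQ : c ≤ Q) :
    e * c ≤ (1 - Q) * f (c * ρ) := by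
  have hstar : c * f (Q * ρ) ≤ Q * f (c * ρ) := by
    have := hf.mul_map_le_mul_map_of_le hf0 (mul_nonneg hc hρ.le)
      (mul_le_mul_of_nonneg_right hcQ hρ.le)
    exact le_of_mul_le_mul_right (by linarith) hρ
  refine le_of_mul_le_mul_left ?_ hQ
  calc Q * (e * c) = (1 - Q) * (c * f (Q * ρ)) := by linear_combination c * hfix
    _ ≤ (1 - Q) * (Q * f (c * ρ)) := by gcongr
    _ = Q * ((1 - Q) * f (c * ρ)) := by ring

def fixedPoints (f : ℝ → ℝ) (ρ a : ℝ) : Set ℝ :=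
  {x ∈ Icc 0 1 | x = f (x * ρ) / (a + f (x * ρ))}

theorem le_of_mem_upperBounds_fixedPoints {f : ℝ → ℝ} (hf_cont : ContinuousOn f (Ici 0))
    (hf_nonneg : ∀ x ≥ 0, 0 ≤ f x) {ρ a c Q : ℝ} (hρ : 0 ≤ ρ) (ha : 0 < a)
    (hQ : Q ∈ upperBounds (fixedPoints f ρ a)) (hc0 : 0 ≤ c) (hc1 : c ≤ 1)
    (hac : a * c ≤ (1 - c) * f (c * ρ)) : c ≤ Q := by
  have hφ : ContinuousOn (fun x => f (x * ρ)) (Icc c 1) :=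
    hf_cont.comp (by fun_prop) fun x hx => mul_nonneg (hc0.trans hx.1) hρ
  obtain ⟨x, hx, hfix⟩ := exists_eq_div_add_of_mul_le ha hc1 hφ
    (fun x hx => hf_nonneg _ (mul_nonneg (hc0.trans hx.1) hρ)) hac
  exact hx.1.trans (hQ ⟨⟨hc0.trans hx.1, hx.2⟩, hfix⟩)

theorem stmt3_general
    (f : ℝ → ℝ)
    (hf_conc : ConcaveOn ℝ (Ici (0:ℝ)) f)
    (hf_cont : ContinuousOn f (Ici (0:ℝ)))
    (hf_nonneg : ∀ x ≥ (0:ℝ), 0 ≤ f x)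
    (hf0 : f 0 = 0)
    (ρ e : ℝ) (hρ : 0 < ρ) (he : 0 < e)
    (q : ℝ → ℝ)
    (hq : ∀ α > (0:ℝ),
      IsGreatest {x ∈ Icc (0:ℝ) 1 | x = f (x * ρ) / (α * e + f (x * ρ))} (q α))
    (η : ℝ) (hη : 0 < η) (hq1 : η ≤ q 1) :
    (∀ β : ℝ, 1 < β → β < (1 - η)⁻¹ → β * η + 1 - β ≤ q β) ∧
    (∀ α : ℝ, 0 < α → α < 1 → α * η ≤ q α) := by
  obtain ⟨⟨⟨-, hQ1⟩, hQfix⟩, -⟩ := hq 1 one_pos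
  have hQ : 0 < q 1 := hη.trans_le hq1
  rw [eq_div_add_iff (by linarith [hf_nonneg _ (mul_nonneg hQ.le hρ.le)]), one_mul] at hQfix
  have hQ_lt : q 1 < 1 := hQ1.lt_of_ne fun h => by simp [h] at hQfix; linarith
  have below_q1 : ∀ c, 0 ≤ c → c ≤ q 1 → e * c ≤ (1 - q 1) * f (c * ρ) := fun c hc hcQ =>
    mul_le_one_sub_mul_of_le_of_fixed hf_conc hf0.ge hρ hQ hQ1 hQfix hc hcQ
  have le_q : ∀ α > 0, ∀ c, 0 ≤ c → c ≤ 1 → α * e * c ≤ (1 - c) * f (c * ρ) → c ≤ q α :=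
    fun α hα _ hc0 hc1 hc => le_of_mem_upperBounds_fixedPoints hf_cont hf_nonneg hρ.le
      (by positivity) (hq α hα).2 hc0 hc1 hc
  refine ⟨fun β hβ hβη => ?_, fun α hα0 hα1 => ?_⟩
  · set c := β * η + 1 - β
    have hβη' : β * (1 - η) < 1 := by
      rwa [← mul_one (1 - η)⁻¹, lt_inv_mul_iff₀' (by linarith)] at hβη
    have hc0 : 0 ≤ c := by nlinarith
    have hcη : c ≤ η := by nlinarith
    have hfc := hf_nonneg (c * ρ) (mul_nonneg hc0 hρ.le)
    refine le_q β (by linarith) c hc0 (by linarith) ?_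
    calc β * e * c = β * (e * c) := mul_assoc _ _ _
      _ ≤ β * ((1 - q 1) * f (c * ρ)) :=
        mul_le_mul_of_nonneg_left (below_q1 c hc0 (hcη.trans hq1)) (by linarith)
      _ ≤ β * ((1 - η) * f (c * ρ)) := by gcongr
      _ = (1 - c) * f (c * ρ) := by ring
  · set c := α * η
    have hc0 : 0 ≤ c := by positivity
    have hcη : c ≤ η := mul_le_of_le_one_left hη.le hα1.le
    have hfc := hf_nonneg (c * ρ) (mul_nonneg hc0 hρ.le)
    refine le_q α hα0 c hc0 (by linarith) ?_
    calc α * e * c ≤ e * c := by gcongr; exact mul_le_of_le_one_left he.le hα1.le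
      _ ≤ (1 - q 1) * f (c * ρ) := below_q1 c hc0 (hcη.trans hq1)
      _ ≤ (1 - c) * f (c * ρ) := by gcongr; linarith

/-- Let `f : [0,∞) → [0,∞)` be increasing, concave and continuous with
`f 0 = 0`.  Fix `ρ, e > 0` and for `α > 0` let `q α` be the largest solution
`x ∈ [0,1]` of `x = f(xρ)/(αe + f(xρ))`.  If `q 1 ≥ η` for some `η > 0`, then
`q β ≥ βη + 1 − β` for every `β ∈ (1, (1−η)⁻¹)`, and `q α ≥ αη` for every
`α ∈ (0,1)`. -/
theorem stmt3
    (f : ℝ → ℝ)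
    (hf_mono : MonotoneOn f (Ici (0:ℝ)))
    (hf_conc : ConcaveOn ℝ (Ici (0:ℝ)) f)
    (hf_cont : ContinuousOn f (Ici (0:ℝ)))
    (hf_nonneg : ∀ x ≥ (0:ℝ), 0 ≤ f x)
    (hf0 : f 0 = 0)
    (ρ e : ℝ) (hρ : 0 < ρ) (he : 0 < e)
    (q : ℝ → ℝ)
    (hq : ∀ α > (0:ℝ),
      IsGreatest {x ∈ Icc (0:ℝ) 1 | x = f (x * ρ) / (α * e + f (x * ρ))} (q α))
    (η : ℝ) (hη : 0 < η) (hq1 : η ≤ q 1) :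
    (∀ β : ℝ, 1 < β → β < (1 - η)⁻¹ → β * η + 1 - β ≤ q β) ∧
    (∀ α : ℝ, 0 < α → α < 1 → α * η ≤ q α) :=
  stmt3_general f hf_conc hf_cont hf_nonneg hf0 ρ e hρ he q hq η hη hq1
end

section
/- If 1/2 ≤ α ≤ β and q_β > 0, then q_β ≤ q_α and q_α − q_β ≤ (β − α)/α. -/
open Set

set_option maxHeartbeats 1000000 in
/-- Let `f : [0,∞) → [0,∞)` be increasing, concave and continuously
differentiable with `f 0 = 0` and `f′(0) > 0`.  Fix `ρ, e > 0` and for `α > 0`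
let `q α` be the largest solution `x ∈ [0,1]` of `x = f(xρ)/(αe + f(xρ))`.
If `1/2 ≤ α ≤ β` and `q β > 0`, then `q β ≤ q α` and `q α − q β ≤ (β − α)/α`. -/
theorem stmt4
    (f : ℝ → ℝ)
    (hf_mono : MonotoneOn f (Ici (0:ℝ)))
    (hf_conc : ConcaveOn ℝ (Ici (0:ℝ)) f)
    (hf_diff : ContDiff ℝ 1 f)
    (hf_nonneg : ∀ x ≥ (0:ℝ), 0 ≤ f x)
    (hf0 : f 0 = 0)
    (hf'0 : 0 < deriv f 0)
    (ρ e : ℝ) (hρ : 0 < ρ) (he : 0 < e)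
    (q : ℝ → ℝ)
    (hq : ∀ α > (0:ℝ),
      IsGreatest {x ∈ Icc (0:ℝ) 1 | x = f (x * ρ) / (α * e + f (x * ρ))} (q α))
    (α β : ℝ) (hα : 1/2 ≤ α) (hαβ : α ≤ β) (hqβ : 0 < q β) :
    q β ≤ q α ∧ q α - q β ≤ (β - α) / α := by
  have hα0 : (0:ℝ) < α := lt_of_lt_of_le (by norm_num) hα
  have hβ0 : (0:ℝ) < β := lt_of_lt_of_le hα0 hαβ
  obtain ⟨⟨⟨hqβ0, hqβ1⟩, hqβeq⟩, hqβub⟩ := hq β hβ0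
  obtain ⟨⟨⟨hqα0, hqα1⟩, hqαeq⟩, hqαub⟩ := hq α hα0
  set fβ := f (q β * ρ) with hfβdef
  set fα := f (q α * ρ) with hfαdef
  have hfβ_nonneg : 0 ≤ fβ := hf_nonneg _ (by positivity)
  have hfα_nonneg : 0 ≤ fα := hf_nonneg _ (by positivity)
  have hdenβ : 0 < β * e + fβ := by positivity
  have hdenα : 0 < α * e + fα := by positivity
  -- fixed point equations in product form
  have eqβ : q β * (β * e + fβ) = fβ := by
    rw [hqβeq]; field_simp
  have eqα : q α * (α * e + fα) = fα := by
    rw [hqαeq]; field_simp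
  -- Step 1: find a fixed point of the α-map in [q β, 1]
  have hcont : ContinuousOn (fun x => f (x * ρ) / (α * e + f (x * ρ)) - x)
      (Icc (q β) 1) := by
    apply ContinuousOn.sub _ continuousOn_id
    apply ContinuousOn.div
    · exact (hf_diff.continuous.comp (continuous_id.mul continuous_const)).continuousOn
    · exact continuousOn_const.add
        (hf_diff.continuous.comp (continuous_id.mul continuous_const)).continuousOn
    · intro x hx
      have hx0 : 0 ≤ x := le_trans hqβ0 hx.1
      have : 0 ≤ f (x * ρ) := hf_nonneg _ (by positivity)
      positivity
  set F : ℝ → ℝ := fun x => f (x * ρ) / (α * e + f (x * ρ)) - x with hFdef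
  have hF1 : F 1 ≤ 0 := by
    have h1 : 0 ≤ f (1 * ρ) := hf_nonneg _ (by positivity)
    have h2 : 0 < α * e + f (1 * ρ) := by positivity
    have : f (1 * ρ) / (α * e + f (1 * ρ)) ≤ 1 := by
      rw [div_le_one h2]; nlinarith
    simp only [hFdef]; linarith
  have hFβ : 0 ≤ F (q β) := by
    have hdαβ : 0 < α * e + fβ := by positivity
    have hkey : q β * (α * e + fβ) ≤ fβ := by nlinarith [eqβ, mul_nonneg (mul_nonneg hqβ0 he.le) (sub_nonneg.mpr hαβ)]
    have : q β ≤ fβ / (α * e + fβ) := by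
      rw [le_div_iff₀ hdαβ]; exact hkey
    simp only [hFdef, ← hfβdef]; linarith
  obtain ⟨c, hcmem, hc0⟩ := intermediate_value_Icc' hqβ1 hcont ⟨hF1, hFβ⟩
  have hcfix : c = f (c * ρ) / (α * e + f (c * ρ)) := (sub_eq_zero.mp hc0).symm
  have hc_in : c ∈ {x ∈ Icc (0:ℝ) 1 | x = f (x * ρ) / (α * e + f (x * ρ))} :=
    ⟨⟨le_trans hqβ0 hcmem.1, hcmem.2⟩, hcfix⟩
  have hstep1 : q β ≤ q α := le_trans hcmem.1 (hqαub hc_in)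
  refine ⟨hstep1, ?_⟩
  -- Step 2
  have hqα_pos : 0 < q α := lt_of_lt_of_le hqβ hstep1
  have eα : α * e * q α = fα * (1 - q α) := by linear_combination eqα
  have eβ : β * e * q β = fβ * (1 - q β) := by linear_combination eqβ
  have hqα_lt1 : q α < 1 := by
    by_contra h
    push_neg at h
    nlinarith [eα]
  have hqβ_lt1 : q β < 1 := lt_of_le_of_lt hstep1 hqα_lt1
  -- concavity: fα * q β ≤ fβ * q α
  have hconc : fα * q β ≤ fβ * q α := by
    have ht0 : 0 ≤ q β / q α := by positivity
    have ht1 : q β / q α ≤ 1 := by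
      rw [div_le_one hqα_pos]; exact hstep1
    have h1mt : 0 ≤ 1 - q β / q α := by linarith
    have hmem0 : (0:ℝ) ∈ Ici (0:ℝ) := Set.self_mem_Ici
    have hmemα : q α * ρ ∈ Ici (0:ℝ) := Set.mem_Ici.mpr (by positivity)
    have := hf_conc.2 hmem0 hmemα h1mt ht0 (by ring)
    simp only [smul_eq_mul, mul_zero, zero_add, hf0] at this
    have harg : q β / q α * (q α * ρ) = q β * ρ := by
      field_simp
    rw [harg] at this
    -- this : (1 - q β / q α) * 0 + q β / q α * fα ≤ fβ
    have h2 : q β / q α * fα ≤ fβ := by linarith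
    have h3 : q β / q α * fα * q α ≤ fβ * q α :=
      mul_le_mul_of_nonneg_right h2 hqα_pos.le
    have h4 : q β / q α * fα * q α = fα * q β := by
      field_simp
    linarith [h4 ▸ h3]
  -- derive α * (1 - q β) ≤ β * (1 - q α)
  have hpos : 0 < e * q α * q β := by positivity
  have h1 : α * (1 - q β) ≤ β * (1 - q α) := by
    have hnn : (0:ℝ) ≤ (1 - q α) * (1 - q β) := by nlinarith
    have hmul : fα * q β * ((1 - q α) * (1 - q β)) ≤ fβ * q α * ((1 - q α) * (1 - q β)) :=
      mul_le_mul_of_nonneg_right hconc hnn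
    have l1 : (e * q α * q β) * (α * (1 - q β)) = fα * (1 - q α) * (q β * (1 - q β)) := by
      linear_combination (q β * (1 - q β)) * eα
    have l2 : (e * q α * q β) * (β * (1 - q α)) = fβ * (1 - q β) * (q α * (1 - q α)) := by
      linear_combination (q α * (1 - q α)) * eβ
    have h2 : (e * q α * q β) * (α * (1 - q β)) ≤ (e * q α * q β) * (β * (1 - q α)) := by
      rw [l1, l2]; nlinarith [hmul]
    exact le_of_mul_le_mul_left h2 hpos
  rw [le_div_iff₀ hα0]
  nlinarith [h1, mul_le_mul_of_nonneg_right hαβ hqα0]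
end

section
/- For any measurable h : Ω → [0,H], any z ∈ Ω and any t with 0 < t ≤ H·c_max·σ_max·v_d, the probability that |(A/m)·Σ_{j=1}^m c(z,Y_j;r)·h(Y_j) − ∫_Ω c(z,y;r)·h(y)·σ(y) dy| ≥ t is at most 2·exp(−C₂·(m·r^d/A)·(t/H)²). -/
/-!
The summands `A c(z,Y_j;r) h(Y_j)` are i.i.d. with values in `[0, b]`, `b = A c_max H / r^d`, and
mean `∫_Ω c h σ`. Since `c(z,·;r)` vanishes outside the ball of radius `r` about `z`, their
second moment is at most `(σ_max / A) b² r^d v_d = H c_max σ_max v_d · b =: V`. Bernstein's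
inequality (the Chernoff bound together with `eˣ ≤ 1 + x + 3x²/4` for `|x| ≤ 1`) bounds the
probability that the centred sum exceeds `m t` in absolute value by `2 exp(-m t² / (3V))`
as long as `t b ≤ V`, which is the hypothesis `t ≤ H c_max σ_max v_d`.
-/

open Set Metric MeasureTheory Real ProbabilityTheory
open scoped ENNReal

lemma Real.exp_le_one_add_add_three_quarters_mul_sq {x : ℝ} (hx : |x| ≤ 1) :
    exp x ≤ 1 + x + 3 / 4 * x ^ 2 := by
  have h := Real.exp_bound hx (n := 2) (by norm_num)
  norm_num [Finset.sum_range_succ, Nat.factorial, sq_abs] at h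
  linarith [(abs_le.1 h).2]

section Bernstein

variable {W ι : Type*} [MeasurableSpace W] {μ : Measure W} [IsProbabilityMeasure μ] [Fintype ι]

lemma mgf_le_exp_of_abs_le {X : W → ℝ} {b V u : ℝ} (hX : AEMeasurable X μ)
    (hb : ∀ᵐ ω ∂μ, |X ω| ≤ b) (hmean : μ[X] = 0) (hvar : ∫ ω, X ω ^ 2 ∂μ ≤ V)
    (hu : |u| * b ≤ 1) :
    mgf X μ u ≤ exp (3 / 4 * u ^ 2 * V) := by
  have hX_int : Integrable X μ :=
    .of_bound hX.aestronglyMeasurable b (by simpa only [Real.norm_eq_abs] using hb)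
  have hX_sq_int : Integrable (fun ω => X ω ^ 2) μ :=
    (MemLp.of_bound hX.aestronglyMeasurable b
      (by simpa only [Real.norm_eq_abs] using hb)).integrable_sq
  have hux : ∀ᵐ ω ∂μ, |u * X ω| ≤ 1 := hb.mono fun ω hω => by
    rw [abs_mul]
    exact (mul_le_mul_of_nonneg_left hω (abs_nonneg u)).trans hu
  have hexp_int : Integrable (fun ω => exp (u * X ω)) μ := by
    refine .of_bound (measurable_exp.comp_aemeasurable (hX.const_mul u)).aestronglyMeasurable
      (exp 1) (hux.mono fun ω hω => ?_)
    rw [Real.norm_eq_abs, abs_exp, exp_le_exp]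
    exact (le_abs_self _).trans hω
  have h_lin_int : Integrable (fun ω => 1 + u * X ω) μ :=
    (integrable_const 1).add (hX_int.const_mul u)
  calc mgf X μ u ≤ ∫ ω, (1 + u * X ω + 3 / 4 * u ^ 2 * X ω ^ 2) ∂μ := by
        refine integral_mono_ae hexp_int (h_lin_int.add (hX_sq_int.const_mul _)) ?_
        filter_upwards [hux] with ω hω
        linarith [Real.exp_le_one_add_add_three_quarters_mul_sq hω]
    _ = 1 + 3 / 4 * u ^ 2 * ∫ ω, X ω ^ 2 ∂μ := by
        rw [integral_add h_lin_int (hX_sq_int.const_mul _),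
          integral_add (integrable_const 1) (hX_int.const_mul u),
          integral_const_mul, integral_const_mul, hmean]
        simp
    _ ≤ 1 + 3 / 4 * u ^ 2 * V := by gcongr
    _ ≤ exp (3 / 4 * u ^ 2 * V) := by linarith [add_one_le_exp (3 / 4 * u ^ 2 * V)]

lemma measureReal_sum_ge_le_of_abs_le {X : ι → W → ℝ} {b V t : ℝ}
    (h_indep : iIndepFun X μ) (hX : ∀ i, Measurable (X i))
    (hb : ∀ i, ∀ᵐ ω ∂μ, |X i ω| ≤ b) (hmean : ∀ i, μ[X i] = 0)
    (hvar : ∀ i, ∫ ω, X i ω ^ 2 ∂μ ≤ V) (ht : 0 < t) (hV : 0 < V) (htb : t * b ≤ V) :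
    μ.real {ω | Fintype.card ι * t ≤ ∑ i, X i ω}
      ≤ exp (-(Fintype.card ι * t ^ 2 / (3 * V))) := by
  -- the Chernoff parameter minimising `-s n t + (3/4) n s² V`
  set s := 2 * t / (3 * V) with hs
  have hs_nonneg : 0 ≤ s := by positivity
  have hsb : |s| * b ≤ 1 := by
    rw [abs_of_nonneg hs_nonneg, hs, div_mul_eq_mul_div, div_le_one (by positivity)]
    linarith
  have h_int : ∀ i ∈ Finset.univ, Integrable (fun ω => exp (s * X i ω)) μ := fun i _ =>
    integrable_exp_mul_of_le s b hs_nonneg (hX i).aemeasurable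
      ((hb i).mono fun _ h => (le_abs_self _).trans h)
  calc μ.real {ω | Fintype.card ι * t ≤ ∑ i, X i ω}
      ≤ exp (-s * (Fintype.card ι * t)) * mgf (∑ i, X i) μ s := by
        simpa only [Finset.sum_apply] using
          measure_ge_le_exp_mul_mgf _ hs_nonneg (h_indep.integrable_exp_mul_sum hX h_int)
    _ = exp (-s * (Fintype.card ι * t)) * ∏ i, mgf (X i) μ s := by
        rw [h_indep.mgf_sum hX]
    _ ≤ exp (-s * (Fintype.card ι * t)) * ∏ _i : ι, exp (3 / 4 * s ^ 2 * V) := by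
        gcongr with i
        · exact fun i _ => mgf_nonneg
        · exact mgf_le_exp_of_abs_le (hX i).aemeasurable (hb i) (hmean i) (hvar i) hsb
    _ = exp (-(Fintype.card ι * t ^ 2 / (3 * V))) := by
        rw [Finset.prod_const, Finset.card_univ, ← exp_nat_mul, ← exp_add]
        congr 1
        rw [hs]
        field_simp
        ring

lemma measure_abs_sum_ge_le_of_abs_le {X : ι → W → ℝ} {b V t : ℝ}
    (h_indep : iIndepFun X μ) (hX : ∀ i, Measurable (X i))
    (hb : ∀ i, ∀ᵐ ω ∂μ, |X i ω| ≤ b) (hmean : ∀ i, μ[X i] = 0)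
    (hvar : ∀ i, ∫ ω, X i ω ^ 2 ∂μ ≤ V) (ht : 0 < t) (hV : 0 < V) (htb : t * b ≤ V) :
    μ {ω | Fintype.card ι * t ≤ |∑ i, X i ω|}
      ≤ ENNReal.ofReal (2 * exp (-(Fintype.card ι * t ^ 2 / (3 * V)))) := by
  have h_upper := measureReal_sum_ge_le_of_abs_le h_indep hX hb hmean hvar ht hV htb
  have h_lower := measureReal_sum_ge_le_of_abs_le (X := fun i ω => -X i ω)
    (h_indep.comp (fun _ => Neg.neg) fun _ => measurable_neg) (fun i => (hX i).neg)
    (by simpa only [abs_neg] using hb) (fun i => by rw [integral_neg, hmean i, neg_zero])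
    (by simpa only [neg_sq] using hvar) ht hV htb
  have h_split : {ω | Fintype.card ι * t ≤ |∑ i, X i ω|}
      ⊆ {ω | Fintype.card ι * t ≤ ∑ i, X i ω} ∪ {ω | Fintype.card ι * t ≤ ∑ i, -X i ω} := by
    intro ω hω
    simpa only [mem_union, mem_ofPred_eq, Finset.sum_neg_distrib] using le_abs.1 hω
  calc μ {ω | Fintype.card ι * t ≤ |∑ i, X i ω|}
      ≤ μ {ω | Fintype.card ι * t ≤ ∑ i, X i ω} + μ {ω | Fintype.card ι * t ≤ ∑ i, -X i ω} :=
        (measure_mono h_split).trans (measure_union_le _ _)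
    _ ≤ ENNReal.ofReal (2 * exp (-(Fintype.card ι * t ^ 2 / (3 * V)))) := by
        rw [← ofReal_measureReal, ← ofReal_measureReal, ← ENNReal.ofReal_add measureReal_nonneg
          measureReal_nonneg, two_mul]
        exact ENNReal.ofReal_le_ofReal (add_le_add h_upper h_lower)

lemma ae_abs_sub_integral_le_of_mem_Icc {Z : W → ℝ} {a b : ℝ} (hZ : AEMeasurable Z μ)
    (hab : ∀ᵐ ω ∂μ, Z ω ∈ Icc a b) : ∀ᵐ ω ∂μ, |Z ω - μ[Z]| ≤ b - a := by
  have hmean : μ[Z] ∈ Icc a b :=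
    (convex_Icc a b).integral_mem isClosed_Icc hab (.of_mem_Icc a b hZ hab)
  filter_upwards [hab] with ω hω
  rw [abs_sub_le_iff]
  constructor <;> linarith [hω.1, hω.2, hmean.1, hmean.2]

lemma measure_abs_sum_sub_integral_ge_le {Z : ι → W → ℝ}
    {b V t : ℝ} (h_indep : iIndepFun Z μ) (hZ : ∀ i, Measurable (Z i))
    (hb : ∀ i, ∀ᵐ ω ∂μ, Z i ω ∈ Icc 0 b) (hvar : ∀ i, ∫ ω, Z i ω ^ 2 ∂μ ≤ V)
    (ht : 0 < t) (hV : 0 < V) (htb : t * b ≤ V) :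
    μ {ω | Fintype.card ι * t ≤ |∑ i, (Z i ω - μ[Z i])|}
      ≤ ENNReal.ofReal (2 * exp (-(Fintype.card ι * t ^ 2 / (3 * V)))) := by
  have hZ_int : ∀ i, Integrable (Z i) μ := fun i => .of_mem_Icc 0 b (hZ i).aemeasurable (hb i)
  have h_indep' : iIndepFun (fun i ω => Z i ω - μ[Z i]) μ :=
    h_indep.comp (fun i (x : ℝ) => x - ∫ ω, Z i ω ∂μ) fun i => measurable_id.sub_const _
  refine measure_abs_sum_ge_le_of_abs_le h_indep'
    (fun i => (hZ i).sub_const _)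
    (fun i => by simpa only [sub_zero] using
      ae_abs_sub_integral_le_of_mem_Icc (hZ i).aemeasurable (hb i))
    (fun i => by rw [integral_sub (hZ_int i) (integrable_const _), integral_const]; simp)
    (fun i => ?_) ht hV htb
  rw [← variance_eq_integral (hZ i).aemeasurable]
  exact (variance_le_expectation_sq (hZ i).aestronglyMeasurable).trans (hvar i)

end Bernstein

section Sampling

variable {W E : Type*} [MeasurableSpace W] [MeasurableSpace E] {μ : Measure W} {ν : Measure E}
  {s : Set E} {f : E → ℝ} {Y : W → E}

lemma ae_mem_of_map_eq_withDensity {g : E → ℝ≥0∞} (hY : AEMeasurable Y μ)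
    (hs : MeasurableSet s) (hlaw : μ.map Y = (ν.restrict s).withDensity g) :
    ∀ᵐ ω ∂μ, Y ω ∈ s :=
  ae_of_ae_map hY (hlaw ▸ (withDensity_absolutelyContinuous _ _).ae_le (ae_restrict_mem hs))

lemma integral_comp_eq_setIntegral_mul_of_map_eq_withDensity (hY : Measurable Y)
    (hs : MeasurableSet s) (hf : Measurable f) (hf_nonneg : ∀ y ∈ s, 0 ≤ f y)
    (hlaw : μ.map Y = (ν.restrict s).withDensity fun y => ENNReal.ofReal (f y))
    {ψ : E → ℝ} (hψ : Measurable ψ) :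
    ∫ ω, ψ (Y ω) ∂μ = ∫ y in s, f y * ψ y ∂ν := by
  rw [← integral_map hY.aemeasurable hψ.aestronglyMeasurable, hlaw,
    integral_withDensity_eq_integral_toReal_smul hf.ennreal_ofReal
      (ae_of_all _ fun _ => ENNReal.ofReal_lt_top)]
  exact setIntegral_congr_fun hs fun y hy => by
    rw [ENNReal.toReal_ofReal (hf_nonneg y hy), smul_eq_mul]

lemma setIntegral_le_mul_measureReal_inter {K : Set E} {g : E → ℝ} {M : ℝ}
    (hs : MeasurableSet s) (hK : ν (s ∩ K) ≠ ∞) (hg_le : ∀ y ∈ s ∩ K, |g y| ≤ M)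
    (hg_zero : ∀ y ∈ s, y ∉ K → g y = 0) :
    ∫ y in s, g y ∂ν ≤ M * ν.real (s ∩ K) := by
  rw [setIntegral_eq_of_subset_of_forall_sdiff_eq_zero hs inter_subset_left
    fun y hy => hg_zero y hy.1 fun hyK => hy.2 ⟨hy.1, hyK⟩]
  exact (Real.le_norm_self _).trans <| norm_setIntegral_le_of_norm_le_const hK.lt_top
    fun y hy => (Real.norm_eq_abs _).trans_le (hg_le y hy)

lemma integral_sq_comp_le_of_map_eq_withDensity {K : Set E} {ψ : E → ℝ} {F b : ℝ}
    (hY : Measurable Y) (hs : MeasurableSet s) (hf : Measurable f)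
    (hf_mem : ∀ y ∈ s, f y ∈ Icc 0 F)
    (hlaw : μ.map Y = (ν.restrict s).withDensity fun y => ENNReal.ofReal (f y))
    (hψ : Measurable ψ) (hψ_mem : ∀ y ∈ s, ψ y ∈ Icc 0 b) (hψ_zero : ∀ y ∈ s, y ∉ K → ψ y = 0)
    (hK : ν (s ∩ K) ≠ ∞) :
    ∫ ω, ψ (Y ω) ^ 2 ∂μ ≤ F * b ^ 2 * ν.real (s ∩ K) := by
  rw [integral_comp_eq_setIntegral_mul_of_map_eq_withDensity hY hs hf (fun y hy => (hf_mem y hy).1)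
    hlaw (hψ.pow_const 2)]
  refine setIntegral_le_mul_measureReal_inter hs hK (fun y hy => ?_)
    fun y hy hyK => by rw [hψ_zero y hy hyK]; ring
  obtain ⟨hf0, hfF⟩ := hf_mem y hy.1
  obtain ⟨hψ0, hψb⟩ := hψ_mem y hy.1
  have hF : 0 ≤ F := hf0.trans hfF
  rw [abs_of_nonneg (by positivity)]
  gcongr

lemma measure_abs_sum_sub_setIntegral_ge_le [IsProbabilityMeasure μ] {ι : Type*} [Fintype ι]
    {Y : ι → W → E} {K : Set E} {ψ : E → ℝ} {F b V t : ℝ} (h_indep : iIndepFun Y μ)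
    (hY : ∀ i, Measurable (Y i)) (hs : MeasurableSet s) (hf : Measurable f)
    (hf_mem : ∀ y ∈ s, f y ∈ Icc 0 F)
    (hlaw : ∀ i, μ.map (Y i) = (ν.restrict s).withDensity fun y => ENNReal.ofReal (f y))
    (hψ : Measurable ψ) (hψ_mem : ∀ y ∈ s, ψ y ∈ Icc 0 b) (hψ_zero : ∀ y ∈ s, y ∉ K → ψ y = 0)
    (hK : ν (s ∩ K) ≠ ∞) (hFV : F * b ^ 2 * ν.real (s ∩ K) ≤ V)
    (ht : 0 < t) (hV : 0 < V) (htb : t * b ≤ V) :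
    μ {ω | Fintype.card ι * t ≤ |∑ i, (ψ (Y i ω) - ∫ y in s, f y * ψ y ∂ν)|}
      ≤ ENNReal.ofReal (2 * exp (-(Fintype.card ι * t ^ 2 / (3 * V)))) := by
  have hmean (i : ι) : ∫ ω, ψ (Y i ω) ∂μ = ∫ y in s, f y * ψ y ∂ν :=
    integral_comp_eq_setIntegral_mul_of_map_eq_withDensity (hY i) hs hf
      (fun y hy => (hf_mem y hy).1) (hlaw i) hψ
  simpa only [hmean] using measure_abs_sum_sub_integral_ge_le (Z := fun i ω => ψ (Y i ω))
    (h_indep.comp (fun _ => ψ) fun _ => hψ) (fun i => hψ.comp (hY i))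
    (fun i => (ae_mem_of_map_eq_withDensity (hY i).aemeasurable hs (hlaw i)).mono
      fun ω hω => hψ_mem _ hω)
    (fun i => (integral_sq_comp_le_of_map_eq_withDensity (hY i) hs hf hf_mem (hlaw i) hψ hψ_mem
      hψ_zero hK).trans hFV) ht hV htb

end Sampling

lemma pos_of_setIntegral_pos_of_le {E : Type*} [MeasurableSpace E] {ν : Measure E} {s : Set E}
    {f : E → ℝ} {M : ℝ} (hs : MeasurableSet s) (hfM : ∀ y ∈ s, f y ≤ M)
    (hpos : 0 < ∫ y in s, f y ∂ν) : 0 < M := by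
  by_contra! hM
  exact hpos.not_ge (setIntegral_nonpos hs fun y hy => (hfM y hy).trans hM)

lemma le_abs_div_mul_sum_sub_iff {n : ℕ} (hn : 1 ≤ n) (x : Fin n → ℝ) (A a t : ℝ) :
    t ≤ |A / n * ∑ i, x i - a| ↔ n * t ≤ |∑ i, (A * x i - a)| := by
  have hn : (0 : ℝ) < n := by exact_mod_cast hn
  have hsum : ∑ i, (A * x i - a) = n * (A / n * ∑ i, x i - a) := by
    rw [Finset.sum_sub_distrib, ← Finset.mul_sum, Finset.sum_const, Finset.card_univ,
      Fintype.card_fin, nsmul_eq_mul]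
    field_simp
  rw [hsum, abs_mul, abs_of_pos hn, mul_le_mul_iff_right₀ hn]

section Kernel

variable {E : Type*} [PseudoMetricSpace E] {k : ℝ → ℝ} {kmax r : ℝ}

lemma scaled_kernel_mem_Icc (hr : 0 < r) (hk : ∀ x, 0 ≤ x → k x ∈ Icc 0 kmax) (d : ℕ)
    (z y : E) : k (dist z y / r) / r ^ d ∈ Icc 0 (kmax / r ^ d) := by
  obtain ⟨h0, hmax⟩ := hk (dist z y / r) (div_nonneg dist_nonneg hr.le)
  exact ⟨by positivity, by gcongr⟩

lemma scaled_kernel_eq_zero (hr : 0 < r) (hk : ∀ x, 1 < x → k x = 0) (d : ℕ) {z y : E}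
    (hzy : y ∉ closedBall z r) : k (dist z y / r) / r ^ d = 0 := by
  rw [mem_closedBall, not_le, dist_comm, ← one_lt_div hr] at hzy
  rw [hk _ hzy, zero_div]

end Kernel

theorem stmt6_general
    (d : ℕ)
    (Ω : Set (EuclideanSpace ℝ (Fin d)))
    (hΩ_meas : MeasurableSet Ω)
    (σ : EuclideanSpace ℝ (Fin d) → ℝ) (σmax : ℝ)
    (hσ_meas : Measurable σ) (hσ_bnd : ∀ y ∈ Ω, σ y ∈ Icc 0 σmax)
    (A : ℝ) (hA : A = ∫ y in Ω, σ y) (hA_pos : 0 < A)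
    (r : ℝ) (hr : 0 < r)
    (cz : EuclideanSpace ℝ (Fin d) → ℝ → ℝ) (cmax : ℝ)
    (hcz_bnd : ∀ z ∈ Ω, ∀ x : ℝ, 0 ≤ x → cz z x ∈ Icc 0 cmax)
    (hcz_zero : ∀ z ∈ Ω, ∀ x : ℝ, 1 < x → cz z x = 0)
    (hcz_meas : ∀ z ∈ Ω, Measurable (cz z))
    (c : EuclideanSpace ℝ (Fin d) → EuclideanSpace ℝ (Fin d) → ℝ)
    (hc : ∀ z y, c z y = cz z (dist z y / r) / r ^ d)
    (vd C₂ : ℝ)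
    (hvd : vd = (volume (ball (0 : EuclideanSpace ℝ (Fin d)) 1)).toReal)
    (hC₂ : C₂ = (3 * cmax ^ 2 * σmax * vd)⁻¹)
    (W : Type) [MeasurableSpace W] (P : Measure W) [IsProbabilityMeasure P]
    (m : ℕ) (hm : 1 ≤ m)
    (Y : Fin m → W → EuclideanSpace ℝ (Fin d))
    (hY_meas : ∀ j, Measurable (Y j))
    (hY_indep : ProbabilityTheory.iIndepFun Y P)
    (hY_law : ∀ j, Measure.map (Y j) P =
      (volume.restrict Ω).withDensity (fun y => ENNReal.ofReal (σ y / A)))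
    (h : EuclideanSpace ℝ (Fin d) → ℝ) (H : ℝ) (hH : 0 < H)
    (hh_meas : Measurable h) (hh_bnd : ∀ y ∈ Ω, h y ∈ Icc 0 H)
    (z : EuclideanSpace ℝ (Fin d)) (hz : z ∈ Ω)
    (t : ℝ) (ht : 0 < t) (ht2 : t ≤ H * cmax * σmax * vd) :
    P {ω | t ≤ |(A / m) * ∑ j : Fin m, c z (Y j ω) * h (Y j ω)
              - ∫ y in Ω, c z y * h y * σ y|}
      ≤ ENNReal.ofReal (2 * Real.exp (-C₂ * ((m : ℝ) * r ^ d / A) * (t / H) ^ 2)) := by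
  have hσmax : 0 < σmax :=
    pos_of_setIntegral_pos_of_le hΩ_meas (fun y hy => (hσ_bnd y hy).2) (hA ▸ hA_pos)
  have hvd_pos : 0 < vd :=
    hvd ▸ ENNReal.toReal_pos (measure_ball_pos volume 0 one_pos).ne' measure_ball_lt_top.ne
  have hcmax : 0 < cmax := by
    by_contra! hcmax
    nlinarith [mul_nonpos_of_nonpos_of_nonneg hcmax (by positivity : 0 ≤ H * σmax * vd)]
  set b := A * cmax * H / r ^ d with hb
  set φ : EuclideanSpace ℝ (Fin d) → ℝ := fun y => A * (c z y * h y) with hφ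
  have hφ_meas : Measurable φ := by
    have := hcz_meas z hz
    simp only [hφ, hc]
    fun_prop
  have hφ_mem : ∀ y ∈ Ω, φ y ∈ Icc 0 b := fun y hy => by
    obtain ⟨hc0, hc1⟩ := hc z y ▸ scaled_kernel_mem_Icc hr (hcz_bnd z hz) d z y
    obtain ⟨hh0, hh1⟩ := hh_bnd y hy
    refine ⟨by positivity, ?_⟩
    calc A * (c z y * h y) ≤ A * (cmax / r ^ d * H) := by gcongr
      _ = b := by ring
  have hφ_zero : ∀ y ∈ Ω, y ∉ closedBall z r → φ y = 0 := fun y _ hy => by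
    simp only [hφ, hc, scaled_kernel_eq_zero hr (hcz_zero z hz) d hy, zero_mul, mul_zero]
  have hvar_le : σmax / A * b ^ 2 * volume.real (Ω ∩ closedBall z r)
      ≤ H * cmax * σmax * vd * b := by
    calc σmax / A * b ^ 2 * volume.real (Ω ∩ closedBall z r)
        ≤ σmax / A * b ^ 2 * volume.real (closedBall z r) := by
          gcongr
          exacts [measure_closedBall_lt_top.ne, inter_subset_right]
      _ = H * cmax * σmax * vd * b := by
          rw [Measure.addHaar_real_closedBall volume z hr.le, finrank_euclideanSpace_fin,
            measureReal_def, ← hvd, hb]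
          field_simp
  have hmean : ∫ y in Ω, σ y / A * φ y = ∫ y in Ω, c z y * h y * σ y :=
    setIntegral_congr_fun hΩ_meas fun y _ => by simp only [hφ]; field_simp
  have hbern := measure_abs_sum_sub_setIntegral_ge_le hY_indep hY_meas hΩ_meas
    (hσ_meas.div_const A) (fun y hy => ⟨div_nonneg (hσ_bnd y hy).1 hA_pos.le,
      div_le_div_of_nonneg_right (hσ_bnd y hy).2 hA_pos.le⟩) hY_law hφ_meas hφ_mem hφ_zero
    ((measure_mono inter_subset_right).trans_lt measure_closedBall_lt_top).ne hvar_le ht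
    (by positivity) (mul_le_mul_of_nonneg_right ht2 (by positivity))
  rw [hmean, Fintype.card_fin] at hbern
  simp only [le_abs_div_mul_sum_sub_iff hm]
  refine hbern.trans_eq ?_
  rw [hC₂, hb]
  congr 3
  field_simp

/-- concentration of the empirical colonization pressure.  With
`Y₁,…,Y_m` i.i.d. points in `Ω` with density `A⁻¹σ`, for any measurable
`h : Ω → [0,H]`, `z ∈ Ω` and `0 < t ≤ H c_max σ_max v_d`,
`ℙ(|(A/m) Σ_j c(z,Y_j;r) h(Y_j) − ∫_Ω c(z,y;r) h(y) σ(y) dy| ≥ t)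
  ≤ 2 exp(−C₂ (m r^d/A)(t/H)²)`, where `C₂ = 1/(3 c_max² σ_max v_d)`. -/
theorem stmt6
    (d : ℕ) (hd : 1 ≤ d)
    (Ω : Set (EuclideanSpace ℝ (Fin d)))
    (hΩ_bdd : Bornology.IsBounded Ω) (hΩ_meas : MeasurableSet Ω)
    (σ : EuclideanSpace ℝ (Fin d) → ℝ) (σmax : ℝ)
    (hσ_meas : Measurable σ) (hσ_bnd : ∀ y ∈ Ω, σ y ∈ Icc 0 σmax)
    (A : ℝ) (hA : A = ∫ y in Ω, σ y) (hA_pos : 0 < A)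
    (r : ℝ) (hr : 0 < r)
    (cz : EuclideanSpace ℝ (Fin d) → ℝ → ℝ) (cmax : ℝ)
    (hcz_bnd : ∀ z ∈ Ω, ∀ x : ℝ, 0 ≤ x → cz z x ∈ Icc 0 cmax)
    (hcz_zero : ∀ z ∈ Ω, ∀ x : ℝ, 1 < x → cz z x = 0)
    (hcz_meas : ∀ z ∈ Ω, Measurable (cz z))
    (c : EuclideanSpace ℝ (Fin d) → EuclideanSpace ℝ (Fin d) → ℝ)
    (hc : ∀ z y, c z y = cz z (dist z y / r) / r ^ d)
    (vd C₂ : ℝ)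
    (hvd : vd = (volume (ball (0 : EuclideanSpace ℝ (Fin d)) 1)).toReal)
    (hC₂ : C₂ = (3 * cmax ^ 2 * σmax * vd)⁻¹)
    (W : Type) [MeasurableSpace W] (P : Measure W) [IsProbabilityMeasure P]
    (m : ℕ) (hm : 1 ≤ m)
    (Y : Fin m → W → EuclideanSpace ℝ (Fin d))
    (hY_meas : ∀ j, Measurable (Y j))
    (hY_indep : ProbabilityTheory.iIndepFun Y P)
    (hY_law : ∀ j, Measure.map (Y j) P =
      (volume.restrict Ω).withDensity (fun y => ENNReal.ofReal (σ y / A)))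
    (h : EuclideanSpace ℝ (Fin d) → ℝ) (H : ℝ) (hH : 0 < H)
    (hh_meas : Measurable h) (hh_bnd : ∀ y ∈ Ω, h y ∈ Icc 0 H)
    (z : EuclideanSpace ℝ (Fin d)) (hz : z ∈ Ω)
    (t : ℝ) (ht : 0 < t) (ht2 : t ≤ H * cmax * σmax * vd) :
    P {ω | t ≤ |(A / m) * ∑ j : Fin m, c z (Y j ω) * h (Y j ω)
              - ∫ y in Ω, c z y * h y * σ y|}
      ≤ ENNReal.ofReal (2 * Real.exp (-C₂ * ((m : ℝ) * r ^ d / A) * (t / H) ^ 2)) :=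
  stmt6_general d Ω hΩ_meas σ σmax hσ_meas hσ_bnd A hA hA_pos r hr cz cmax hcz_bnd hcz_zero hcz_meas
    c hc vd C₂ hvd hC₂ W P m hm Y hY_meas hY_indep hY_law h H hH hh_meas hh_bnd z hz t ht ht2
end

section
/- Suppose n > 2N(Ω, r/3), there exist 1/2 < α₂ ≤ α₁ < 1 with 2 L_f L_q r ρ_max ≤ e_min (1−α₁)(1−α₂), and L_f ρ_max/e_min ≤ 1/2. Then the probability that p*_{n,i} = 0 for all i = 1,…,n is at least 1 − 2n·exp(−C₂·((n−1)r^d/A)·(ρ_max/(2 a_max))²) − (n/2)·exp(−n·min_{z∈Ω} A^{−1}∫_Ω 1{‖y−z‖ ≤ r/3} σ(y) dy). -/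
/-!
Let `p` be a fixed point of `E_n` and `i` a coordinate at which it is maximal. By concavity
`f(s) ≤ L_f s`, and the kernel is at most `c_max / r^d` on `B(z_i, r)` and vanishes outside, so
`f(S_i(p)) ≤ L_f (A/(n-1)) a_max (c_max / r^d) p_i N_i`, where `N_i` counts the other patches in
`B(z_i, r)`. When `N_i ≤ 2(n-1)q` with `q = σ_max v_d r^d / A` this is at most
`2 L_f ρ_max p_i ≤ e_min p_i`, and then `p_i = f(S_i) / (e_i + f(S_i))` forces `p_i = 0`,
hence `p = 0`.

Conditionally on `z_i`, `N_i` is a sum of `n-1` independent Bernoulli variables of parameter at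
most `q`, so the Chernoff bound at `t = log 2` gives
`P(N_i > 2(n-1)q) ≤ exp((1 - 2 log 2)(n-1)q) ≤ exp(-(n-1)q/12)`. Since
`C₂ (ρ_max / (2 a_max))² = σ_max v_d / 12`, a union bound over `i` bounds the failure
probability by `n` times the first error term.
-/

open Set Metric MeasureTheory Real ProbabilityTheory

lemma ConcaveOn.le_deriv_mul_of_map_zero {f : ℝ → ℝ} (hfc : ConcaveOn ℝ (Ici 0) f)
    (hfd : DifferentiableAt ℝ f 0) (hf0 : f 0 = 0) {x : ℝ} (hx : 0 ≤ x) :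
    f x ≤ deriv f 0 * x := by
  rcases hx.eq_or_lt with rfl | hx
  · simp [hf0]
  have := hfc.slope_le_deriv self_mem_Ici hx.le hx hfd
  rwa [slope_def_field, hf0, sub_zero, sub_zero, div_le_iff₀ hx] at this

lemma eq_zero_of_div_add_eq_of_le_mul {M e F : ℝ} (he : 0 < e) (hF0 : 0 ≤ F) (hF : F ≤ e * M)
    (hfix : F / (e + F) = M) : M = 0 := by
  have hM : M * (e + F) = F := by rw [← hfix, div_mul_cancel₀ _ (by positivity)]
  have hM0 : 0 ≤ M := hfix ▸ by positivity
  have : M * M ≤ 0 := nonpos_of_mul_nonpos_right (by nlinarith) he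
  exact le_antisymm (by nlinarith) hM0

lemma eq_zero_of_forall_div_add_eq {ι : Type*} [Finite ι] {p g e : ι → ℝ}
    (he : ∀ i, 0 < e i) (hg0 : ∀ i, 0 ≤ g i) (hfix : ∀ i, g i / (e i + g i) = p i)
    (hmax : ∀ i, (∀ j, p j ≤ p i) → g i ≤ e i * p i) : p = 0 := by
  cases isEmpty_or_nonempty ι
  · exact Subsingleton.elim _ _
  obtain ⟨i₀, hi₀⟩ := Finite.exists_max p
  have hp₀ : p i₀ = 0 :=
    eq_zero_of_div_add_eq_of_le_mul (he i₀) (hg0 i₀) (hmax i₀ hi₀) (hfix i₀)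
  funext j
  exact le_antisymm ((hi₀ j).trans hp₀.le)
    (hfix j ▸ div_nonneg (hg0 j) (add_nonneg (he j).le (hg0 j)))

lemma Fin.sum_erase_eq_sum_succAbove {M : Type*} [AddCommMonoid M] {m : ℕ}
    (f : Fin (m + 1) → M) (i : Fin (m + 1)) :
    ∑ j ∈ Finset.univ.erase i, f j = ∑ k : Fin m, f (i.succAbove k) := by
  rw [Fin.univ_succAbove m i, Finset.erase_cons, Finset.sum_map]
  rfl

section NeighborCount

variable {E : Type*} [PseudoMetricSpace E]

noncomputable def neighborCount {n : ℕ} (r : ℝ) (x : Fin n → E) (i : Fin n) : ℝ :=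
  ∑ j ∈ Finset.univ.erase i, (closedBall (x i) r).indicator 1 (x j)

lemma neighborCount_eq_sum_succAbove {m : ℕ} (r : ℝ) (x : Fin (m + 1) → E)
    (i : Fin (m + 1)) :
    neighborCount r x i = ∑ k : Fin m, (closedBall (x i) r).indicator 1 (x (i.succAbove k)) :=
  Fin.sum_erase_eq_sum_succAbove _ i

lemma div_pow_mem_Icc_mul_indicator {κ : ℝ → ℝ} {cmax r : ℝ} (d : ℕ) (hr : 0 < r)
    (hκ : ∀ x, 0 ≤ x → κ x ∈ Icc 0 cmax) (hκ₁ : ∀ x, 1 < x → κ x = 0) (z y : E) :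
    κ (dist z y / r) / r ^ d ∈ Icc 0 (cmax / r ^ d * (closedBall z r).indicator 1 y) := by
  have hx : 0 ≤ dist z y / r := by positivity
  refine ⟨div_nonneg (hκ _ hx).1 (by positivity), ?_⟩
  by_cases hy : y ∈ closedBall z r
  · rw [indicator_of_mem hy, Pi.one_apply, mul_one]
    gcongr
    exact (hκ _ hx).2
  · rw [hκ₁ _ ((one_lt_div hr).2 (by simpa [dist_comm] using hy)), indicator_of_notMem hy]
    simp

lemma sum_mul_kernel_mul_le {n : ℕ} {Ω : Set E} {a : E → ℝ} {c : E → E → ℝ} {amax K M r : ℝ}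
    (ha : ∀ z ∈ Ω, a z ∈ Icc 0 amax)
    (hc : ∀ z ∈ Ω, ∀ y, c z y ∈ Icc 0 (K * (closedBall z r).indicator 1 y))
    {x : Fin n → E} (hx : ∀ i, x i ∈ Ω) {p : Fin n → ℝ} (hp : ∀ j, p j ∈ Icc 0 M)
    (i : Fin n) :
    ∑ j ∈ Finset.univ.erase i, a (x j) * c (x i) (x j) * p j ≤
      amax * K * M * neighborCount r x i := by
  rw [neighborCount, Finset.mul_sum]
  refine Finset.sum_le_sum fun j _ => ?_
  obtain ⟨ha0, ha1⟩ := ha _ (hx j)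
  obtain ⟨hc0, hc1⟩ := hc _ (hx i) (x j)
  calc a (x j) * c (x i) (x j) * p j
      ≤ amax * (K * (closedBall (x i) r).indicator 1 (x j)) * M :=
        mul_le_mul (mul_le_mul ha1 hc1 hc0 (ha0.trans ha1)) (hp j).2 (hp j).1
          (mul_nonneg (ha0.trans ha1) (hc0.trans hc1))
    _ = _ := by ring

theorem eq_zero_of_forall_neighborCount_le {n : ℕ} {Ω : Set E} {a e : E → ℝ}
    {c : E → E → ℝ} {f : ℝ → ℝ} {amax K emin Lf w θ r : ℝ}
    (ha : ∀ z ∈ Ω, a z ∈ Icc 0 amax)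
    (hc : ∀ z ∈ Ω, ∀ y, c z y ∈ Icc 0 (K * (closedBall z r).indicator 1 y)) (hK : 0 ≤ K)
    (hemin : 0 < emin) (he : ∀ z ∈ Ω, emin ≤ e z)
    (hf0 : ∀ s, 0 ≤ s → 0 ≤ f s) (hf : ∀ s, 0 ≤ s → f s ≤ Lf * s) (hLf : 0 ≤ Lf)
    (hw : 0 ≤ w) (hθ : Lf * (w * (amax * K * θ)) ≤ emin)
    {x : Fin n → E} (hx : ∀ i, x i ∈ Ω) (hsparse : ∀ i, neighborCount r x i ≤ θ)
    {p S : Fin n → ℝ} (hp : ∀ i, 0 ≤ p i)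
    (hS : ∀ i, S i = w * ∑ j ∈ Finset.univ.erase i, a (x j) * c (x i) (x j) * p j)
    (hfix : ∀ i, f (S i) / (e (x i) + f (S i)) = p i) : p = 0 := by
  have hS0 : ∀ i, 0 ≤ S i := fun i => hS i ▸ mul_nonneg hw (Finset.sum_nonneg fun j _ =>
    mul_nonneg (mul_nonneg (ha _ (hx j)).1 (hc _ (hx i) _).1) (hp j))
  refine eq_zero_of_forall_div_add_eq (fun i => hemin.trans_le (he _ (hx i)))
    (fun i => hf0 _ (hS0 i)) hfix fun i hi => ?_
  have hamax : 0 ≤ amax := (ha _ (hx i)).1.trans (ha _ (hx i)).2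
  have hSi : S i ≤ w * (amax * K * θ) * p i :=
    calc S i ≤ w * (amax * K * p i * neighborCount r x i) := by
          rw [hS i]
          gcongr
          exact sum_mul_kernel_mul_le ha hc hx (fun j => ⟨hp j, hi j⟩) i
      _ ≤ w * (amax * K * p i * θ) := by
          have := hp i
          gcongr
          exact hsparse i
      _ = w * (amax * K * θ) * p i := by ring
  calc f (S i) ≤ Lf * S i := hf _ (hS0 i)
    _ ≤ Lf * (w * (amax * K * θ)) * p i := by rw [mul_assoc]; gcongr
    _ ≤ emin * p i := by have := hp i; gcongr
    _ ≤ e (x i) * p i := by have := hp i; gcongr; exact he _ (hx i)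

end NeighborCount

section Chernoff

variable {Ω : Type*} {m : MeasurableSpace Ω} {μ : Measure Ω} [IsProbabilityMeasure μ]

lemma exp_mul_indicator_one (B : Set Ω) (t : ℝ) (ω : Ω) :
    exp (t * B.indicator 1 ω) = 1 + B.indicator (fun _ => exp t - 1) ω := by
  by_cases hω : ω ∈ B <;> simp [hω]

lemma integrable_exp_mul_indicator_one {B : Set Ω} (hB : MeasurableSet B) (t : ℝ) :
    Integrable (fun ω => exp (t * B.indicator 1 ω)) μ := by
  simp_rw [exp_mul_indicator_one]
  exact (integrable_const 1).add ((integrable_const _).indicator hB)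

lemma mgf_indicator_one {B : Set Ω} (hB : MeasurableSet B) (t : ℝ) :
    mgf (B.indicator 1) μ t = 1 + (exp t - 1) * μ.real B := by
  simp_rw [mgf, exp_mul_indicator_one]
  rw [integral_add (integrable_const 1) ((integrable_const _).indicator hB),
    integral_indicator_const _ hB, integral_const, probReal_univ, smul_eq_mul, smul_eq_mul,
    one_mul, mul_comm]

theorem measure_lt_sum_indicator_le {ι : Type*} [Fintype ι] {B : ι → Set Ω}
    (hB : ∀ i, MeasurableSet (B i))
    (hindep : iIndepFun (fun i => (B i).indicator (1 : Ω → ℝ)) μ)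
    {q t : ℝ} (hq : ∀ i, μ.real (B i) ≤ q) (ht : 0 ≤ t) (θ : ℝ) :
    μ {ω | θ < ∑ i, (B i).indicator 1 ω} ≤
      ENNReal.ofReal (exp (Fintype.card ι * (exp t - 1) * q - t * θ)) := by
  have hmeas : ∀ i, Measurable ((B i).indicator (1 : Ω → ℝ)) :=
    fun i => measurable_const.indicator (hB i)
  have hmgf : mgf (∑ i, (B i).indicator 1) μ t ≤ exp (Fintype.card ι * (exp t - 1) * q) := by
    rw [hindep.mgf_sum hmeas, mul_assoc, exp_nat_mul, ← Finset.card_univ, ← Finset.prod_const]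
    refine Finset.prod_le_prod (fun i _ => mgf_nonneg) fun i _ => ?_
    rw [mgf_indicator_one (hB i)]
    nlinarith [add_one_le_exp ((exp t - 1) * q), hq i, one_le_exp ht]
  have hint : Integrable (fun ω => exp (t * (∑ i, (B i).indicator 1) ω)) μ :=
    hindep.integrable_exp_mul_sum hmeas fun i _ => integrable_exp_mul_indicator_one (hB i) t
  calc μ {ω | θ < ∑ i, (B i).indicator 1 ω}
      ≤ μ {ω | θ ≤ (∑ i, (B i).indicator 1) ω} := by
        refine measure_mono fun ω hω => ?_
        simpa [Finset.sum_apply] using hω.le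
    _ = ENNReal.ofReal (μ.real {ω | θ ≤ (∑ i, (B i).indicator 1) ω}) :=
        (ofReal_measureReal).symm
    _ ≤ ENNReal.ofReal (exp (-t * θ) * mgf (∑ i, (B i).indicator 1) μ t) :=
        ENNReal.ofReal_le_ofReal (measure_ge_le_exp_mul_mgf θ ht hint)
    _ ≤ _ := by
        refine ENNReal.ofReal_le_ofReal ?_
        calc exp (-t * θ) * mgf (∑ i, (B i).indicator 1) μ t
            ≤ exp (-t * θ) * exp (Fintype.card ι * (exp t - 1) * q) := by gcongr
          _ = _ := by rw [← exp_add]; ring_nf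

end Chernoff

theorem measure_pi_two_mul_lt_sum_indicator_le {E : Type*} [MeasurableSpace E] (ν : Measure E)
    [IsProbabilityMeasure ν] {B : Set E} (hB : MeasurableSet B) {q : ℝ} (hq : ν.real B ≤ q)
    (m : ℕ) :
    (Measure.pi fun _ : Fin m => ν) {y | 2 * m * q < ∑ k, B.indicator 1 (y k)} ≤
      ENNReal.ofReal (exp (-(m * q) / 12)) := by
  have hindep : iIndepFun (fun k (y : Fin m → E) => B.indicator (1 : E → ℝ) (y k))
      (Measure.pi fun _ => ν) :=
    iIndepFun_pi fun _ => (measurable_const.indicator hB).aemeasurable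
  have hmarg : ∀ k, (Measure.pi fun _ : Fin m => ν).real ((fun y => y k) ⁻¹' B) ≤ q :=
    fun k => by
      rwa [measureReal_def, (measurePreserving_eval _ k).measure_preimage hB.nullMeasurableSet]
  refine (measure_lt_sum_indicator_le (fun k => measurable_pi_apply k hB) hindep hmarg
    (log_nonneg one_le_two) _).trans (ENNReal.ofReal_le_ofReal (exp_le_exp.2 ?_))
  have hmq : 0 ≤ m * q := mul_nonneg m.cast_nonneg (measureReal_nonneg.trans hq)
  rw [exp_log two_pos, Fintype.card_fin]
  nlinarith [log_two_gt_d9]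

section Sampling

variable {E : Type*} [PseudoMetricSpace E] [MeasurableSpace E] [OpensMeasurableSpace E]
  [SecondCountableTopology E]

lemma measurable_indicator_closedBall (r : ℝ) :
    Measurable fun p : E × E => (closedBall p.1 r).indicator (1 : E → ℝ) p.2 :=
  Measurable.indicator (f := fun _ => (1 : ℝ)) measurable_const
    (measurableSet_le (measurable_snd.dist measurable_fst) measurable_const)

theorem measure_pi_two_mul_lt_neighborCount_le (ν : Measure E) [IsProbabilityMeasure ν]
    {r q : ℝ} (hq : ∀ w, ν.real (closedBall w r) ≤ q) {m : ℕ} (i : Fin (m + 1)) :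
    (Measure.pi fun _ => ν) {x | 2 * m * q < neighborCount r x i} ≤
      ENNReal.ofReal (exp (-(m * q) / 12)) := by
  set U : Set (E × (Fin m → E)) :=
    {p | 2 * m * q < ∑ k, (closedBall p.1 r).indicator 1 (p.2 k)}
  have hU : MeasurableSet U := by
    refine measurableSet_lt measurable_const (Finset.measurable_sum _ fun k _ => ?_)
    exact (measurable_indicator_closedBall r).comp (measurable_fst.prodMk (by fun_prop))
  have hpre : {x | 2 * m * q < neighborCount r x i} =
      MeasurableEquiv.piFinSuccAbove (fun _ => E) i ⁻¹' U := by
    ext x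
    simp [U, neighborCount_eq_sum_succAbove, MeasurableEquiv.piFinSuccAbove_apply,
      Fin.removeNth]
  rw [hpre, (measurePreserving_piFinSuccAbove (fun _ => ν) i).measure_preimage
    hU.nullMeasurableSet, Measure.prod_apply hU]
  calc ∫⁻ w, (Measure.pi fun _ => ν) (Prod.mk w ⁻¹' U) ∂ν
      ≤ ∫⁻ _, ENNReal.ofReal (exp (-(m * q) / 12)) ∂ν :=
        lintegral_mono fun w =>
          measure_pi_two_mul_lt_sum_indicator_le ν measurableSet_closedBall (hq w) m
    _ = ENNReal.ofReal (exp (-(m * q) / 12)) := by simp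

theorem measure_two_mul_lt_neighborCount_le {W : Type*} [MeasurableSpace W] {P : Measure W}
    [IsProbabilityMeasure P] {ν : Measure E} {m : ℕ} {z : W → Fin (m + 1) → E}
    (hz_meas : ∀ i, Measurable fun ω => z ω i) (hz_indep : iIndepFun (fun i ω => z ω i) P)
    (hz_law : ∀ i, P.map (fun ω => z ω i) = ν) {r q : ℝ}
    (hq : ∀ w, ν.real (closedBall w r) ≤ q) (i : Fin (m + 1)) :
    P {ω | 2 * m * q < neighborCount r (z ω) i} ≤ ENNReal.ofReal (exp (-(m * q) / 12)) := by
  have : IsProbabilityMeasure ν :=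
    hz_law 0 ▸ Measure.isProbabilityMeasure_map (hz_meas 0).aemeasurable
  have hlaw : P.map (fun ω i => z ω i) = Measure.pi fun _ => ν := by
    rw [(iIndepFun_iff_map_fun_eq_pi_map fun i => (hz_meas i).aemeasurable).1 hz_indep]
    simp_rw [hz_law]
  refine (Measure.le_map_apply (measurable_pi_lambda _ hz_meas).aemeasurable
    {x | 2 * m * q < neighborCount r x i}).trans ?_
  rw [hlaw]
  exact measure_pi_two_mul_lt_neighborCount_le ν hq i

end Sampling

lemma restrict_withDensity_ofReal_le {α : Type*} [MeasurableSpace α] {μ : Measure α}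
    {Ω s : Set α} (hs : MeasurableSet s) {g : α → ℝ} {C : ℝ} (hg : ∀ y ∈ Ω, g y ≤ C) :
    (μ.restrict Ω).withDensity (fun y => ENNReal.ofReal (g y)) s ≤ ENNReal.ofReal C * μ s := by
  rw [withDensity_apply _ hs, Measure.restrict_restrict hs]
  calc ∫⁻ y in s ∩ Ω, ENNReal.ofReal (g y) ∂μ ≤ ∫⁻ _ in s ∩ Ω, ENNReal.ofReal C ∂μ :=
        setLIntegral_mono measurable_const fun y hy => ENNReal.ofReal_le_ofReal (hg y hy.2)
    _ = ENNReal.ofReal C * μ (s ∩ Ω) := setLIntegral_const _ _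
    _ ≤ ENNReal.ofReal C * μ s := by gcongr; exact inter_subset_left

lemma pos_of_isProbabilityMeasure_restrict_withDensity {α : Type*} [MeasurableSpace α]
    {μ : Measure α} {Ω : Set α} {σ : α → ℝ} (hσ : ∀ y ∈ Ω, 0 ≤ σ y) {A : ℝ}
    [IsProbabilityMeasure ((μ.restrict Ω).withDensity fun y => ENNReal.ofReal (σ y / A))] :
    0 < A := by
  by_contra! hA
  have := restrict_withDensity_ofReal_le (μ := μ) MeasurableSet.univ
    fun y hy => div_nonpos_of_nonneg_of_nonpos (hσ y hy) hA
  simp at this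

lemma measureReal_restrict_withDensity_closedBall_le {d : ℕ}
    {Ω : Set (EuclideanSpace ℝ (Fin d))} {g : EuclideanSpace ℝ (Fin d) → ℝ} {C r : ℝ}
    (hC : 0 ≤ C) (hr : 0 ≤ r) (hg : ∀ y ∈ Ω, g y ≤ C) (w : EuclideanSpace ℝ (Fin d)) :
    ((volume.restrict Ω).withDensity fun y => ENNReal.ofReal (g y)).real (closedBall w r) ≤
      C * (volume (ball (0 : EuclideanSpace ℝ (Fin d)) 1)).toReal * r ^ d := by
  refine ENNReal.toReal_le_of_le_ofReal (by positivity)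
    ((restrict_withDensity_ofReal_le measurableSet_closedBall hg).trans (le_of_eq ?_))
  rw [Measure.addHaar_closedBall _ _ hr, finrank_euclideanSpace_fin,
    ENNReal.ofReal_mul (by positivity), ENNReal.ofReal_mul hC,
    ENNReal.ofReal_toReal measure_ball_lt_top.ne, ENNReal.ofReal_pow hr]
  ring

lemma ofReal_one_sub_mul_le_measure {W ι : Type*} [MeasurableSpace W] [Fintype ι]
    {P : Measure W} [IsProbabilityMeasure P] {S : Set W} {T : ι → Set W}
    (hST : (⋃ i, T i)ᶜ ⊆ S) {b : ℝ} (hb : 0 ≤ b) (hT : ∀ i, P (T i) ≤ ENNReal.ofReal b) :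
    ENNReal.ofReal (1 - Fintype.card ι * b) ≤ P S := by
  have hunion : P (⋃ i, T i) ≤ ENNReal.ofReal (Fintype.card ι * b) := by
    calc P (⋃ i, T i) ≤ ∑ i, P (T i) := measure_iUnion_fintype_le P T
      _ ≤ ∑ _ : ι, ENNReal.ofReal b := Finset.sum_le_sum fun i _ => hT i
      _ = ENNReal.ofReal (Fintype.card ι * b) := by
        simp [ENNReal.ofReal_mul, ENNReal.ofReal_natCast]
  rw [ENNReal.ofReal_sub _ (by positivity), ENNReal.ofReal_one, tsub_le_iff_right]
  calc 1 = P univ := measure_univ.symm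
    _ ≤ P S + P (⋃ i, T i) := by
        refine (measure_mono fun ω _ => ?_).trans (measure_union_le S _)
        by_cases hω : ω ∈ ⋃ i, T i
        exacts [Or.inr hω, Or.inl (hST hω)]
    _ ≤ _ := by gcongr

theorem stmt10_general
    (d : ℕ)
    (Ω : Set (EuclideanSpace ℝ (Fin d)))
    (hΩ_conn : IsConnected Ω)
    (a e σ : EuclideanSpace ℝ (Fin d) → ℝ)
    (amin amax emin emax σmin σmax : ℝ)
    (hamin : 0 < amin) (hemin : 0 < emin) (hσmin : 0 < σmin)
    (ha_bnd : ∀ z ∈ Ω, a z ∈ Icc amin amax)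
    (he_bnd : ∀ z ∈ Ω, e z ∈ Icc emin emax)
    (hσ_bnd : ∀ z ∈ Ω, σ z ∈ Icc σmin σmax)
    (A : ℝ)
    (r : ℝ) (hr : 0 < r)
    (cz : EuclideanSpace ℝ (Fin d) → ℝ → ℝ) (cmax : ℝ)
    (hcz_bnd : ∀ z ∈ Ω, ∀ x : ℝ, 0 ≤ x → cz z x ∈ Icc 0 cmax)
    (hcz_pos : ∀ z ∈ Ω, ∀ x ∈ Ico (0:ℝ) 1, 0 < cz z x)
    (hcz_zero : ∀ z ∈ Ω, ∀ x : ℝ, 1 < x → cz z x = 0)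
    (c : EuclideanSpace ℝ (Fin d) → EuclideanSpace ℝ (Fin d) → ℝ)
    (hc : ∀ z y, c z y = cz z (dist z y / r) / r ^ d)
    (f : ℝ → ℝ)
    (hf_conc : ConcaveOn ℝ (Ici (0:ℝ)) f)
    (hf_diff : ContDiff ℝ 1 f)
    (hf_nonneg : ∀ x ≥ (0:ℝ), 0 ≤ f x)
    (hf0 : f 0 = 0)
    (Lf : ℝ) (hLf : Lf = deriv f 0) (hLf_pos : 0 < Lf)
    (vd ρmax C₂ : ℝ)
    (hvd : vd = (volume (ball (0 : EuclideanSpace ℝ (Fin d)) 1)).toReal)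
    (hρmax : ρmax = amax * cmax * σmax * vd)
    (hC₂ : C₂ = (3 * cmax ^ 2 * σmax * vd)⁻¹)
    (W : Type) [MeasurableSpace W] (P : Measure W) [IsProbabilityMeasure P]
    (n : ℕ) (hn2 : 2 ≤ n)
    (z : W → Fin n → EuclideanSpace ℝ (Fin d))
    (hz_meas : ∀ i, Measurable fun ω => z ω i)
    (hz_mem : ∀ ω i, z ω i ∈ Ω)
    (hz_indep : ProbabilityTheory.iIndepFun
      (fun i ω => z ω i) P)
    (hz_law : ∀ i, Measure.map (fun ω => z ω i) P =
      (volume.restrict Ω).withDensity (fun y => ENNReal.ofReal (σ y / A)))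
    (S : W → (Fin n → ℝ) → Fin n → ℝ)
    (hS : ∀ ω p i, S ω p i =
      (A / ((n : ℝ) - 1)) * ∑ j ∈ Finset.univ.erase i, a (z ω j) * c (z ω i) (z ω j) * p j)
    (En : W → (Fin n → ℝ) → Fin n → ℝ)
    (hEn : ∀ ω p i, En ω p i = f (S ω p i) / (e (z ω i) + f (S ω p i)))
    (pstar : W → Fin n → ℝ)
    (hpstar : ∀ ω, IsGreatest
      {p : Fin n → ℝ | (∀ i, p i ∈ Icc (0:ℝ) 1) ∧ En ω p = p} (pstar ω))
    (hnonviable : Lf * ρmax / emin ≤ 1/2) :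
    ENNReal.ofReal (1
      - 2 * n * Real.exp (-C₂ * (((n : ℝ) - 1) * r ^ d / A) *
          (ρmax / (2 * amax)) ^ 2)
      - ((n : ℝ) / 2) * Real.exp (-(n : ℝ) *
          sInf ((fun z₀ => A⁻¹ * ∫ y in Ω ∩ closedBall z₀ (r / 3), σ y) '' Ω)))
      ≤ P {ω | ∀ i, pstar ω i = 0} := by
  obtain ⟨m, rfl⟩ : ∃ m, n = m + 1 := ⟨n - 1, by omega⟩
  obtain ⟨z₀, hz₀⟩ := hΩ_conn.nonempty
  have : IsProbabilityMeasure
      ((volume.restrict Ω).withDensity fun y => ENNReal.ofReal (σ y / A)) :=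
    hz_law 0 ▸ Measure.isProbabilityMeasure_map (hz_meas 0).aemeasurable
  have hA_pos : 0 < A := pos_of_isProbabilityMeasure_restrict_withDensity (μ := volume)
    fun y hy => hσmin.le.trans (hσ_bnd y hy).1
  have hamax : 0 < amax := hamin.trans_le ((ha_bnd z₀ hz₀).1.trans (ha_bnd z₀ hz₀).2)
  have hσmax : 0 < σmax := hσmin.trans_le ((hσ_bnd z₀ hz₀).1.trans (hσ_bnd z₀ hz₀).2)
  have hcmax : 0 < cmax :=
    (hcz_pos z₀ hz₀ 0 ⟨le_rfl, one_pos⟩).trans_le (hcz_bnd z₀ hz₀ 0 le_rfl).2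
  have hvd_pos : 0 < vd := hvd ▸ ENNReal.toReal_pos (measure_ball_pos _ _ one_pos).ne'
    measure_ball_lt_top.ne
  have hm : (m : ℝ) ≠ 0 := by norm_cast; omega
  have hm1 : ((m + 1 : ℕ) : ℝ) - 1 = m := by push_cast; ring
  simp only [hm1] at hS ⊢
  set q := σmax / A * vd * r ^ d with hq
  have hball : ∀ w, ((volume.restrict Ω).withDensity fun y => ENNReal.ofReal (σ y / A)).real
      (closedBall w r) ≤ q := by
    rw [hq, hvd]
    exact measureReal_restrict_withDensity_closedBall_le (by positivity) hr.le
      fun y hy => div_le_div_of_nonneg_right (hσ_bnd y hy).2 hA_pos.le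
  have hc_bnd : ∀ z ∈ Ω, ∀ y, c z y ∈ Icc 0 (cmax / r ^ d * (closedBall z r).indicator 1 y) :=
    fun z hz y => hc z y ▸ div_pow_mem_Icc_mul_indicator d hr (hcz_bnd z hz) (hcz_zero z hz) z y
  have hf_le : ∀ s, 0 ≤ s → f s ≤ Lf * s := fun s hs =>
    hLf ▸ hf_conc.le_deriv_mul_of_map_zero (hf_diff.differentiable one_ne_zero 0) hf0 hs
  have hpressure : Lf * (A / m * (amax * (cmax / r ^ d) * (2 * m * q))) ≤ emin := by
    have : A / m * (amax * (cmax / r ^ d) * (2 * m * q)) = 2 * ρmax := by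
      rw [hq, hρmax]; field_simp
    rw [this]; linarith [(div_le_iff₀ hemin).1 hnonviable]
  have hextinct : (⋃ i, {ω | 2 * m * q < neighborCount r (z ω) i})ᶜ ⊆
      {ω | ∀ i, pstar ω i = 0} := fun ω hω =>
    congrFun <| eq_zero_of_forall_neighborCount_le
      (fun z hz => ⟨hamin.le.trans (ha_bnd z hz).1, (ha_bnd z hz).2⟩) hc_bnd (by positivity)
      hemin (fun z hz => (he_bnd z hz).1) hf_nonneg hf_le hLf_pos.le (by positivity) hpressure
      (hz_mem ω) (fun i => not_lt.1 fun h => hω (mem_iUnion.2 ⟨i, h⟩))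
      (fun i => ((hpstar ω).1.1 i).1) (hS ω (pstar ω))
      fun i => by rw [← hEn]; exact congrFun (hpstar ω).1.2 i
  have hE1 : -C₂ * (m * r ^ d / A) * (ρmax / (2 * amax)) ^ 2 = -(m * q) / 12 := by
    rw [hC₂, hρmax, hq]; field_simp; ring
  refine le_trans (ENNReal.ofReal_le_ofReal ?_) (ofReal_one_sub_mul_le_measure hextinct
    (exp_pos _).le (measure_two_mul_lt_neighborCount_le hz_meas hz_indep hz_law hball))
  rw [hE1, Fintype.card_fin]
  refine (sub_le_self _ (by positivity)).trans ?_
  nlinarith [exp_pos (-(m * q) / 12)]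

/-- Theorem, extinction case: if `n > 2N(Ω,r/3)`, there exist
`1/2 < α₂ ≤ α₁ < 1` with `2 L_f L_q r ρ_max ≤ e_min(1−α₁)(1−α₂)`, and
`L_f ρ_max/e_min ≤ 1/2`, then with probability at least
`1 − 2n exp(−C₂((n−1)r^d/A)(ρ_max/(2a_max))²)
   − (n/2) exp(−n min_{z∈Ω} A⁻¹∫_Ω 1{‖y−z‖≤r/3}σ(y)dy)`
the greatest equilibrium is extinction: `p*_{n,i} = 0` for all `i`. -/
theorem stmt10
    (d : ℕ) (hd : 1 ≤ d)
    (Ω : Set (EuclideanSpace ℝ (Fin d)))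
    (hΩ_closed : IsClosed Ω) (hΩ_bdd : Bornology.IsBounded Ω) (hΩ_conn : IsConnected Ω)
    (a e σ : EuclideanSpace ℝ (Fin d) → ℝ)
    (La Le Lσ : ℝ)
    (ha_diff : ContDiffOn ℝ 1 a Ω) (he_diff : ContDiffOn ℝ 1 e Ω)
    (hσ_diff : ContDiffOn ℝ 1 σ Ω)
    (ha_lip : LipschitzOnWith (Real.toNNReal La) a Ω)
    (he_lip : LipschitzOnWith (Real.toNNReal Le) e Ω)
    (hσ_lip : LipschitzOnWith (Real.toNNReal Lσ) σ Ω)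
    (amin amax emin emax σmin σmax : ℝ)
    (hamin : 0 < amin) (hemin : 0 < emin) (hσmin : 0 < σmin)
    (ha_bnd : ∀ z ∈ Ω, a z ∈ Icc amin amax)
    (he_bnd : ∀ z ∈ Ω, e z ∈ Icc emin emax)
    (hσ_bnd : ∀ z ∈ Ω, σ z ∈ Icc σmin σmax)
    (A : ℝ) (hA : A = ∫ y in Ω, σ y)
    (r : ℝ) (hr : 0 < r)
    (cz : EuclideanSpace ℝ (Fin d) → ℝ → ℝ) (cmax : ℝ)
    (hcz_bnd : ∀ z ∈ Ω, ∀ x : ℝ, 0 ≤ x → cz z x ∈ Icc 0 cmax)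
    (hcz_pos : ∀ z ∈ Ω, ∀ x ∈ Ico (0:ℝ) 1, 0 < cz z x)
    (hcz_zero : ∀ z ∈ Ω, ∀ x : ℝ, 1 < x → cz z x = 0)
    (hcz_int : ∀ z ∈ Ω, IntegrableOn (cz z) (Ici 0))
    (hcz_unif : UniformContinuousOn
      (fun p : EuclideanSpace ℝ (Fin d) × ℝ => cz p.1 p.2) (Ω ×ˢ Ico (0:ℝ) 1))
    (c : EuclideanSpace ℝ (Fin d) → EuclideanSpace ℝ (Fin d) → ℝ)
    (hc : ∀ z y, c z y = cz z (dist z y / r) / r ^ d)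
    (f : ℝ → ℝ)
    (hf_mono : MonotoneOn f (Ici (0:ℝ)))
    (hf_conc : ConcaveOn ℝ (Ici (0:ℝ)) f)
    (hf_diff : ContDiff ℝ 1 f)
    (hf_nonneg : ∀ x ≥ (0:ℝ), 0 ≤ f x)
    (hf0 : f 0 = 0)
    (Lf : ℝ) (hLf : Lf = deriv f 0) (hLf_pos : 0 < Lf)
    (ρ : EuclideanSpace ℝ (Fin d) → ℝ) (Lρ : ℝ)
    (hρ : ∀ z ∈ Ω, ρ z = ∫ y in Ω, a y * c z y * σ y)
    (hρ_lip : LipschitzOnWith (Real.toNNReal Lρ) ρ Ω)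
    (vd Lq ρmax C₂ : ℝ)
    (hvd : vd = (volume (ball (0 : EuclideanSpace ℝ (Fin d)) 1)).toReal)
    (hLq : Lq = Real.sqrt d / emin * (2 * Lf * Lρ + Le))
    (hρmax : ρmax = amax * cmax * σmax * vd)
    (hC₂ : C₂ = (3 * cmax ^ 2 * σmax * vd)⁻¹)
    (W : Type) [MeasurableSpace W] (P : Measure W) [IsProbabilityMeasure P]
    (n : ℕ) (hn2 : 2 ≤ n)
    (z : W → Fin n → EuclideanSpace ℝ (Fin d))
    (hz_meas : ∀ i, Measurable fun ω => z ω i)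
    (hz_mem : ∀ ω i, z ω i ∈ Ω)
    (hz_indep : ProbabilityTheory.iIndepFun
      (fun i ω => z ω i) P)
    (hz_law : ∀ i, Measure.map (fun ω => z ω i) P =
      (volume.restrict Ω).withDensity (fun y => ENNReal.ofReal (σ y / A)))
    (S : W → (Fin n → ℝ) → Fin n → ℝ)
    (hS : ∀ ω p i, S ω p i =
      (A / ((n : ℝ) - 1)) * ∑ j ∈ Finset.univ.erase i, a (z ω j) * c (z ω i) (z ω j) * p j)
    (En : W → (Fin n → ℝ) → Fin n → ℝ)
    (hEn : ∀ ω p i, En ω p i = f (S ω p i) / (e (z ω i) + f (S ω p i)))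
    (pstar : W → Fin n → ℝ)
    (hpstar : ∀ ω, IsGreatest
      {p : Fin n → ℝ | (∀ i, p i ∈ Icc (0:ℝ) 1) ∧ En ω p = p} (pstar ω))
    (NΩ : ℕ)
    (hNΩ : IsLeast {k : ℕ | ∃ cs : Fin k → EuclideanSpace ℝ (Fin d),
      Ω ⊆ ⋃ i, closedBall (cs i) (r / 3)} NΩ)
    (hn_big : 2 * NΩ < n)
    (hcond : ∃ α₁ α₂ : ℝ, 1/2 < α₂ ∧ α₂ ≤ α₁ ∧ α₁ < 1 ∧
      2 * Lf * Lq * r * ρmax ≤ emin * (1 - α₁) * (1 - α₂))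
    (hnonviable : Lf * ρmax / emin ≤ 1/2) :
    ENNReal.ofReal (1
      - 2 * n * Real.exp (-C₂ * (((n : ℝ) - 1) * r ^ d / A) *
          (ρmax / (2 * amax)) ^ 2)
      - ((n : ℝ) / 2) * Real.exp (-(n : ℝ) *
          sInf ((fun z₀ => A⁻¹ * ∫ y in Ω ∩ closedBall z₀ (r / 3), σ y) '' Ω)))
      ≤ P {ω | ∀ i, pstar ω i = 0} :=
  stmt10_general d Ω hΩ_conn a e σ amin amax emin emax σmin σmax hamin hemin hσmin ha_bnd he_bnd
    hσ_bnd A r hr cz cmax hcz_bnd hcz_pos hcz_zero c hc f hf_conc hf_diff hf_nonneg hf0 Lf hLf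
    hLf_pos vd ρmax C₂ hvd hρmax hC₂ W P n hn2 z hz_meas hz_mem hz_indep hz_law S hS En hEn pstar
    hpstar hnonviable
end

section
/- There is a constant c_d > 0, depending only on the dimension d, with the following property: whenever Ω ⊂ ℝ^d and r > 0 satisfy Ω = ∪_{x∈Ω′} B̄(x, t_x) for some Ω′ ⊆ Ω and radii t_x ≥ r for all x ∈ Ω′, then for every z ∈ Ω the Lebesgue measure of Ω ∩ B̄(z, r/3) is at least c_d r^d. -/
/-!
A point `z ∈ Ω` lies in a ball `B̄(x, t_x)` with `t_x ≥ r`. Moving from `z` towards `x` by the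
fraction `(r/6)/t_x` of `dist z x` gives a point `y` with `B̄(y, r/6) ⊆ B̄(x, t_x) ∩ B̄(z, r/3)`,
and `B̄(y, r/6)` has volume `(r/6)^d` times that of the unit ball.
-/

open Set Metric MeasureTheory Module

section

variable {E : Type*} [NormedAddCommGroup E] [NormedSpace ℝ E]

lemma exists_closedBall_subset_closedBall_inter_closedBall {x z : E} {R s : ℝ}
    (hz : z ∈ closedBall x R) (hs : 0 ≤ s) (hsR : s ≤ R) :
    ∃ y, closedBall y s ⊆ closedBall x R ∩ closedBall z (2 * s) := by
  have hzx : dist z x ≤ R := mem_closedBall.1 hz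
  have hR : 0 ≤ R := hs.trans hsR
  have hθ0 : 0 ≤ s / R := div_nonneg hs hR
  have hθ1 : s / R ≤ 1 := div_le_one_of_le₀ hsR hR
  have hθR : s / R * R = s := by
    rcases hR.eq_or_lt with rfl | hR
    · simp [le_antisymm hsR hs]
    · exact div_mul_cancel₀ s hR.ne'
  refine ⟨AffineMap.lineMap z x (s / R), subset_inter ?_ ?_⟩
  · refine closedBall_subset_closedBall' ?_
    rw [dist_lineMap_right, Real.norm_of_nonneg (by linarith)]
    nlinarith
  · refine closedBall_subset_closedBall' ?_
    rw [dist_lineMap_left, Real.norm_of_nonneg hθ0]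
    nlinarith

variable [MeasurableSpace E] [BorelSpace E] [FiniteDimensional ℝ E]

lemma addHaar_closedBall_inter_closedBall_ge (μ : Measure E) [μ.IsAddHaarMeasure]
    {x z : E} {R s : ℝ} (hz : z ∈ closedBall x R) (hs : 0 ≤ s) (hsR : s ≤ R) :
    ENNReal.ofReal (s ^ finrank ℝ E) * μ (closedBall 0 1) ≤
      μ (closedBall x R ∩ closedBall z (2 * s)) := by
  obtain ⟨y, hy⟩ := exists_closedBall_subset_closedBall_inter_closedBall hz hs hsR
  rw [← μ.addHaar_closedBall' y hs]
  exact measure_mono hy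

end

theorem stmt18_general (d : ℕ) :
    ∃ c : ℝ, 0 < c ∧
      ∀ (Ω Ω' : Set (EuclideanSpace ℝ (Fin d))) (t : EuclideanSpace ℝ (Fin d) → ℝ)
        (r : ℝ), 0 < r → Ω' ⊆ Ω → (∀ x ∈ Ω', r ≤ t x) →
        Ω = ⋃ x ∈ Ω', closedBall x (t x) →
        ∀ z ∈ Ω, ENNReal.ofReal (c * r ^ d) ≤ volume (Ω ∩ closedBall z (r / 3)) := by
  set V := volume (closedBall (0 : EuclideanSpace ℝ (Fin d)) 1)
  have hV : V ≠ ⊤ := measure_closedBall_lt_top.ne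
  have hVpos : 0 < V.toReal := ENNReal.toReal_pos (measure_closedBall_pos volume 0 one_pos).ne' hV
  refine ⟨V.toReal / 6 ^ d, by positivity, ?_⟩
  intro Ω Ω' t r hr _ ht hΩ z hz
  obtain ⟨x, hx, hzx⟩ : ∃ x ∈ Ω', z ∈ closedBall x (t x) := by
    rw [hΩ] at hz; simpa using hz
  have hball : closedBall x (t x) ⊆ Ω :=
    hΩ ▸ subset_biUnion_of_mem (u := fun x ↦ closedBall x (t x)) hx
  have hvol := addHaar_closedBall_inter_closedBall_ge volume hzx (by positivity : 0 ≤ r / 6)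
    (by linarith [ht x hx])
  rw [finrank_euclideanSpace_fin, show 2 * (r / 6) = r / 3 by ring] at hvol
  calc ENNReal.ofReal (V.toReal / 6 ^ d * r ^ d)
      = ENNReal.ofReal ((r / 6) ^ d) * V := by
        rw [← ENNReal.ofReal_toReal hV, ← ENNReal.ofReal_mul (by positivity),
          ENNReal.toReal_ofReal ENNReal.toReal_nonneg, div_pow]
        ring_nf
    _ ≤ volume (closedBall x (t x) ∩ closedBall z (r / 3)) := hvol
    _ ≤ volume (Ω ∩ closedBall z (r / 3)) := measure_mono (inter_subset_inter_left _ hball)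

/-- There is a constant `c_d > 0` depending only on the dimension `d`
such that whenever `Ω ⊆ ℝ^d` is a union `Ω = ⋃_{x ∈ Ω'} B̄(x, t_x)` of closed balls
with centers `Ω' ⊆ Ω` and radii `t_x ≥ r > 0`, then for every `z ∈ Ω` the Lebesgue
measure of `Ω ∩ B̄(z, r/3)` is at least `c_d·r^d`. -/
theorem stmt18 (d : ℕ) (hd : 1 ≤ d) :
    ∃ c : ℝ, 0 < c ∧
      ∀ (Ω Ω' : Set (EuclideanSpace ℝ (Fin d))) (t : EuclideanSpace ℝ (Fin d) → ℝ)
        (r : ℝ), 0 < r → Ω' ⊆ Ω → (∀ x ∈ Ω', r ≤ t x) →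
        Ω = ⋃ x ∈ Ω', closedBall x (t x) →
        ∀ z ∈ Ω, ENNReal.ofReal (c * r ^ d) ≤ volume (Ω ∩ closedBall z (r / 3)) :=
  stmt18_general d
end
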